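/- arXiv:0804.3312 — 8 statements merged into one kernel-verified Lean document; each statement's English description precedes it below -/
import Mathlib

section
/- Let S be the restriction of A₀ to the kernel of τ, where τ : H_{A₀} → h is bounded surjective with dense kernel, and 0 ∈ ρ(A₀). Then the domain of S* equals {φ ∈ H : φ = φ₀ + G₀ζ, φ₀ ∈ D(A₀), ζ ∈ h} and S*φ = A₀φ₀. -/
/-!
Put `T := τ A₀⁻¹ : H → h`, a bounded surjection with `G₀ = T*`. By the open mapping theorem `T*`
is bounded below, so its range is closed and equals `(Ker T)ᗮ = (A₀ (Ker τ))ᗮ`. If `φ` lies in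
`D(S*)` with `S*φ = η`, then `φ - A₀⁻¹η` is orthogonal to `A₀ (Ker τ)`, hence equals `G₀ζ`.
Conversely `⟪G₀ζ, A₀x⟫ = ⟪ζ, τx⟫` vanishes on `Ker τ`, so `φ₀ + G₀ζ ∈ D(S*)` with `S*` acting as
`A₀φ₀`, and density of `Ker τ` makes `S*φ` unique.
-/

open scoped InnerProduct

local notation "⟪" x ", " y "⟫" => @inner ℂ _ _ x y

namespace ContinuousLinearMap

variable {𝕜 E F : Type*} [RCLike 𝕜]
  [NormedAddCommGroup E] [InnerProductSpace 𝕜 E] [CompleteSpace E]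
  [NormedAddCommGroup F] [InnerProductSpace 𝕜 F] [CompleteSpace F]

theorem exists_antilipschitzWith_adjoint_of_surjective {T : E →L[𝕜] F}
    (hT : Function.Surjective T) : ∃ K, AntilipschitzWith K (T†) := by
  obtain ⟨K, hK, hpre⟩ := T.exists_preimage_norm_le hT
  refine ⟨K.toNNReal, T†.antilipschitz_of_bound fun ζ => ?_⟩
  obtain ⟨y, rfl, hy⟩ := hpre ζ
  have hsq : ‖T y‖ * ‖T y‖ ≤ K * ‖(T†) (T y)‖ * ‖T y‖ :=
    calc ‖T y‖ * ‖T y‖ = RCLike.re (inner 𝕜 ((T†) (T y)) y) := by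
          rw [adjoint_inner_left, inner_self_eq_norm_mul_norm]
      _ ≤ ‖(T†) (T y)‖ * ‖y‖ := (RCLike.re_le_norm _).trans (norm_inner_le_norm _ _)
      _ ≤ ‖(T†) (T y)‖ * (K * ‖T y‖) := by gcongr
      _ = K * ‖(T†) (T y)‖ * ‖T y‖ := by ring
  rw [Real.coe_toNNReal _ hK.le]
  rcases (norm_nonneg (T y)).eq_or_lt with h0 | hpos
  · rw [← h0]; positivity
  · exact le_of_mul_le_mul_right hsq hpos

theorem range_adjoint_eq_orthogonal_ker_of_surjective {T : E →L[𝕜] F}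
    (hT : Function.Surjective T) : (T†).range = T.kerᗮ := by
  obtain ⟨K, hK⟩ := exists_antilipschitzWith_adjoint_of_surjective hT
  have hclosed : IsClosed ((T†).range : Set E) := by
    rw [LinearMap.coe_range, coe_coe]
    exact hK.isClosed_range (T†).uniformContinuous
  rw [orthogonal_ker, hclosed.submodule_topologicalClosure_eq]

end ContinuousLinearMap

section Krein

variable {H h : Type*} [NormedAddCommGroup H] [InnerProductSpace ℂ H]
  [NormedAddCommGroup h] [InnerProductSpace ℂ h]
  {D : Submodule ℂ H} {A : D →ₗ[ℂ] H} {τ : D →ₗ[ℂ] h}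
  {Ainv : H →L[ℂ] H} {hAinvmem : ∀ y : H, Ainv y ∈ D}

theorem exists_continuousLinearMap_eq_τ_comp_Ainv {C : ℝ}
    (hτ : ∀ x : D, ‖τ x‖ ≤ C * (‖(x : H)‖ + ‖A x‖))
    (hAinv1 : ∀ y : H, A ⟨Ainv y, hAinvmem y⟩ = y) :
    ∃ T : H →L[ℂ] h, ∀ y, T y = τ ⟨Ainv y, hAinvmem y⟩ := by
  let L : H →ₗ[ℂ] h := τ ∘ₗ Ainv.toLinearMap.codRestrict D hAinvmem
  have hL : ∀ y, ‖L y‖ ≤ |C| * (‖Ainv‖ + 1) * ‖y‖ := fun y =>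
    calc ‖L y‖ ≤ C * (‖Ainv y‖ + ‖y‖) := by
          have := hτ ⟨Ainv y, hAinvmem y⟩
          rwa [hAinv1] at this
      _ ≤ |C| * (‖Ainv y‖ + ‖y‖) := by gcongr; exact le_abs_self C
      _ ≤ |C| * (‖Ainv‖ * ‖y‖ + ‖y‖) := by gcongr; exact Ainv.le_opNorm y
      _ = |C| * (‖Ainv‖ + 1) * ‖y‖ := by ring
  exact ⟨L.mkContinuous _ hL, fun _ => rfl⟩

theorem mk_Ainv_A (hAinv2 : ∀ x : D, Ainv (A x) = (x : H)) (x : D) :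
    (⟨Ainv (A x), hAinvmem (A x)⟩ : D) = x :=
  Subtype.ext (hAinv2 x)

theorem inner_G0_apply_A_eq_inner_τ {G0 : h →L[ℂ] H}
    (hAinv2 : ∀ x : D, Ainv (A x) = (x : H))
    (hG0 : ∀ (ζ : h) (y : H), ⟪G0 ζ, y⟫ = ⟪ζ, τ ⟨Ainv y, hAinvmem y⟩⟫) (ζ : h) (x : D) :
    ⟪G0 ζ, A x⟫ = ⟪ζ, τ x⟫ := by
  rw [hG0, mk_Ainv_A hAinv2]

theorem inner_A_eq_inner_add_G0_apply_A {G0 : h →L[ℂ] H}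
    (hsym : ∀ x y : D, ⟪A x, (y : H)⟫ = ⟪(x : H), A y⟫)
    (hAinv2 : ∀ x : D, Ainv (A x) = (x : H))
    (hG0 : ∀ (ζ : h) (y : H), ⟪G0 ζ, y⟫ = ⟪ζ, τ ⟨Ainv y, hAinvmem y⟩⟫)
    (φ₀ : D) (ζ : h) {x : D} (hx : τ x = 0) :
    ⟪A φ₀, (x : H)⟫ = ⟪(φ₀ : H) + G0 ζ, A x⟫ := by
  rw [inner_add_left, inner_G0_apply_A_eq_inner_τ hAinv2 hG0, hx, inner_zero_right, add_zero,
    hsym]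

theorem sub_Ainv_mem_orthogonal_ker {T : H →L[ℂ] h}
    (hT : ∀ y, T y = τ ⟨Ainv y, hAinvmem y⟩)
    (hsym : ∀ x y : D, ⟪A x, (y : H)⟫ = ⟪(x : H), A y⟫)
    (hAinv1 : ∀ y : H, A ⟨Ainv y, hAinvmem y⟩ = y) {φ η : H}
    (hη : ∀ x : D, τ x = 0 → ⟪η, (x : H)⟫ = ⟪φ, A x⟫) :
    φ - Ainv η ∈ T.kerᗮ := by
  refine (Submodule.mem_orthogonal' _ _).2 fun y hy => ?_
  set x : D := ⟨Ainv y, hAinvmem y⟩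
  have hτx : τ x = 0 := by rw [← hT]; exact hy
  calc ⟪φ - Ainv η, y⟫ = ⟪φ, A x⟫ - ⟪A ⟨Ainv η, hAinvmem η⟩, (x : H)⟫ := by
        rw [inner_sub_left, hsym, hAinv1]
    _ = 0 := by rw [← hη x hτx, hAinv1, sub_self]

end Krein

theorem krein_adjoint_domain_general
    {H h : Type*}
    [NormedAddCommGroup H] [InnerProductSpace ℂ H] [CompleteSpace H]
    [NormedAddCommGroup h] [InnerProductSpace ℂ h] [CompleteSpace h]
    (D : Submodule ℂ H)
    (A : D →ₗ[ℂ] H)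
    (hsym : ∀ x y : D, ⟪A x, (y : H)⟫ = ⟪(x : H), A y⟫)
    (τ : D →ₗ[ℂ] h) (C : ℝ)
    (hτ : ∀ x : D, ‖τ x‖ ≤ C * (‖(x : H)‖ + ‖A x‖))
    (Ainv : H →L[ℂ] H)
    (hAinvmem : ∀ y : H, Ainv y ∈ D)
    (hAinv1 : ∀ y : H, A ⟨Ainv y, hAinvmem y⟩ = y)
    (hAinv2 : ∀ x : D, Ainv (A x) = (x : H))
    (hτsurj : Function.Surjective τ)
    (hker : Dense ((fun x : D => (x : H)) '' {x : D | τ x = 0}))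
    (G0 : h →L[ℂ] H)
    (hG0 : ∀ (ζ : h) (y : H), ⟪G0 ζ, y⟫ = ⟪ζ, τ ⟨Ainv y, hAinvmem y⟩⟫) :
    ∀ φ : H,
      ((∃ η : H, ∀ x : D, τ x = 0 → ⟪η, (x : H)⟫ = ⟪φ, A x⟫) ↔
        ∃ (φ₀ : D) (ζ : h), φ = (φ₀ : H) + G0 ζ) ∧
      ∀ (η : H) (φ₀ : D) (ζ : h),
        (∀ x : D, τ x = 0 → ⟪η, (x : H)⟫ = ⟪φ, A x⟫) →
        φ = (φ₀ : H) + G0 ζ → η = A φ₀ := by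
  intro φ
  obtain ⟨T, hT⟩ := exists_continuousLinearMap_eq_τ_comp_Ainv hτ hAinv1
  have hTsurj : Function.Surjective T := fun ζ => by
    obtain ⟨x, rfl⟩ := hτsurj ζ
    exact ⟨A x, by rw [hT, mk_Ainv_A hAinv2]⟩
  have hG0T : G0 = T† := (ContinuousLinearMap.eq_adjoint_iff G0 T).2 fun ζ y => by rw [hG0, hT]
  refine ⟨⟨fun ⟨η, hη⟩ => ?_, fun ⟨φ₀, ζ, hφ⟩ => ⟨A φ₀, fun x hx => ?_⟩⟩,
    fun η φ₀ ζ hη hφ => ?_⟩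
  · obtain ⟨ζ, hζ : G0 ζ = φ - Ainv η⟩ : φ - Ainv η ∈ G0.range := by
      rw [hG0T, ContinuousLinearMap.range_adjoint_eq_orthogonal_ker_of_surjective hTsurj]
      exact sub_Ainv_mem_orthogonal_ker hT hsym hAinv1 hη
    exact ⟨⟨Ainv η, hAinvmem η⟩, ζ, by rw [hζ]; abel⟩
  · rw [hφ]; exact inner_A_eq_inner_add_G0_apply_A hsym hAinv2 hG0 φ₀ ζ hx
  · refine hker.eq_of_inner_left ℂ ?_
    rintro _ ⟨x, hx, rfl⟩
    rw [hη x hx, hφ, inner_A_eq_inner_add_G0_apply_A hsym hAinv2 hG0 φ₀ ζ hx]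

/-- with `S := A₀ restricted to Ker τ` (τ bounded, surjective, with
dense kernel) and `G₀ := (τ A₀⁻¹)*`, the domain of `S*` is
`{φ = φ₀ + G₀ ζ : φ₀ ∈ 𝒟(A₀), ζ ∈ h}` and `S* φ = A₀ φ₀`.  Membership of a pair
`(φ, η)` in the graph of `S*` is expressed by the defining adjoint relation
`∀ x ∈ Ker τ, ⟪η, x⟫ = ⟪φ, A₀ x⟫`. -/
theorem krein_adjoint_domain
    {H h : Type*}
    [NormedAddCommGroup H] [InnerProductSpace ℂ H] [CompleteSpace H]
    [NormedAddCommGroup h] [InnerProductSpace ℂ h] [CompleteSpace h]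
    (D : Submodule ℂ H) (hDdense : Dense (D : Set H))
    (A : D →ₗ[ℂ] H)
    (hsym : ∀ x y : D, ⟪A x, (y : H)⟫ = ⟪(x : H), A y⟫)
    (ρA : Set ℂ)
    (hρconj : ∀ z ∈ ρA, (starRingEnd ℂ) z ∈ ρA)
    (R : ℂ → H →L[ℂ] H)
    (hmem : ∀ z, z ∈ ρA → ∀ y : H, R z y ∈ D)
    (hres1 : ∀ z (hz : z ∈ ρA) (y : H), z • R z y - A ⟨R z y, hmem z hz y⟩ = y)
    (hres2 : ∀ z ∈ ρA, ∀ x : D, R z (z • (x : H) - A x) = (x : H))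
    (hRadj : ∀ z ∈ ρA, ContinuousLinearMap.adjoint (R z) = R ((starRingEnd ℂ) z))
    (τ : D →ₗ[ℂ] h) (C : ℝ)
    (hτ : ∀ x : D, ‖τ x‖ ≤ C * (‖(x : H)‖ + ‖A x‖))
    (G : ℂ → h →L[ℂ] H)
    (hG : ∀ z (hz : z ∈ ρA) (ζ : h) (y : H),
      ⟪G z ζ, y⟫ = ⟪ζ, τ ⟨R ((starRingEnd ℂ) z) y, hmem _ (hρconj z hz) y⟩⟫)
    (Ainv : H →L[ℂ] H)
    (hAinvmem : ∀ y : H, Ainv y ∈ D)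
    (hAinv1 : ∀ y : H, A ⟨Ainv y, hAinvmem y⟩ = y)
    (hAinv2 : ∀ x : D, Ainv (A x) = (x : H))
    (hτsurj : Function.Surjective τ)
    (hker : Dense ((fun x : D => (x : H)) '' {x : D | τ x = 0}))
    (h0 : (0 : ℂ) ∈ ρA)
    (G0 : h →L[ℂ] H)
    (hG0 : ∀ (ζ : h) (y : H), ⟪G0 ζ, y⟫ = ⟪ζ, τ ⟨Ainv y, hAinvmem y⟩⟫) :
    ∀ φ : H,
      ((∃ η : H, ∀ x : D, τ x = 0 → ⟪η, (x : H)⟫ = ⟪φ, A x⟫) ↔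
        ∃ (φ₀ : D) (ζ : h), φ = (φ₀ : H) + G0 ζ) ∧
      ∀ (η : H) (φ₀ : D) (ζ : h),
        (∀ x : D, τ x = 0 → ⟪η, (x : H)⟫ = ⟪φ, A x⟫) →
        φ = (φ₀ : H) + G0 ζ → η = A φ₀ :=
  krein_adjoint_domain_general D A hsym τ C hτ Ainv hAinvmem hAinv1 hAinv2 hτsurj hker G0 hG0
end

section
/- With S, S*, τ as above, for all φ, ψ ∈ D(S*) with decompositions φ = φ₀ + G₀ζ_φ, ψ = ψ₀ + G₀ζ_ψ, the abstract Green identity holds: ⟨S*φ, ψ⟩ − ⟨φ, S*ψ⟩ = (τφ₀, ζ_ψ) − (ζ_φ, τψ₀). -/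
/- Abstract Krein framework (Posilicano): the self-adjoint operator A₀ on the
Hilbert space H is modeled by its domain `D`, its action `A`, its resolvent set
`ρA` and its resolvent family `R z = (-A₀+z)⁻¹`; `τ : 𝒟(A₀) → h` is bounded
w.r.t. the graph norm; `G z = (τ R_z̄)*` is characterized by the adjoint identity. -/

local notation "⟪" x ", " y "⟫" => @inner ℂ _ _ x y

/-- abstract Green identity on `𝒟(S*)`:
`⟨S*φ, ψ⟩ − ⟨φ, S*ψ⟩ = (τφ₀, ζ_ψ) − (ζ_φ, τψ₀)` for `φ = φ₀ + G₀ζ_φ`,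
`ψ = ψ₀ + G₀ζ_ψ`. -/
theorem krein_green_identity
    {H h : Type*}
    [NormedAddCommGroup H] [InnerProductSpace ℂ H] [CompleteSpace H]
    [NormedAddCommGroup h] [InnerProductSpace ℂ h] [CompleteSpace h]
    (D : Submodule ℂ H) (hDdense : Dense (D : Set H))
    (A : D →ₗ[ℂ] H)
    (hsym : ∀ x y : D, ⟪A x, (y : H)⟫ = ⟪(x : H), A y⟫)
    (ρA : Set ℂ)
    (hρconj : ∀ z ∈ ρA, (starRingEnd ℂ) z ∈ ρA)
    (R : ℂ → H →L[ℂ] H)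
    (hmem : ∀ z, z ∈ ρA → ∀ y : H, R z y ∈ D)
    (hres1 : ∀ z (hz : z ∈ ρA) (y : H), z • R z y - A ⟨R z y, hmem z hz y⟩ = y)
    (hres2 : ∀ z ∈ ρA, ∀ x : D, R z (z • (x : H) - A x) = (x : H))
    (hRadj : ∀ z ∈ ρA, ContinuousLinearMap.adjoint (R z) = R ((starRingEnd ℂ) z))
    (τ : D →ₗ[ℂ] h) (C : ℝ)
    (hτ : ∀ x : D, ‖τ x‖ ≤ C * (‖(x : H)‖ + ‖A x‖))
    (G : ℂ → h →L[ℂ] H)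
    (hG : ∀ z (hz : z ∈ ρA) (ζ : h) (y : H),
      ⟪G z ζ, y⟫ = ⟪ζ, τ ⟨R ((starRingEnd ℂ) z) y, hmem _ (hρconj z hz) y⟩⟫)
    (Ainv : H →L[ℂ] H)
    (hAinvmem : ∀ y : H, Ainv y ∈ D)
    (hAinv1 : ∀ y : H, A ⟨Ainv y, hAinvmem y⟩ = y)
    (hAinv2 : ∀ x : D, Ainv (A x) = (x : H))
    (hτsurj : Function.Surjective τ)
    (hker : Dense ((fun x : D => (x : H)) '' {x : D | τ x = 0}))
    (h0 : (0 : ℂ) ∈ ρA)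
    (G0 : h →L[ℂ] H)
    (hG0 : ∀ (ζ : h) (y : H), ⟪G0 ζ, y⟫ = ⟪ζ, τ ⟨Ainv y, hAinvmem y⟩⟫) :
    ∀ (φ₀ ψ₀ : D) (ζφ ζψ : h),
      ⟪A φ₀, (ψ₀ : H) + G0 ζψ⟫ - ⟪(φ₀ : H) + G0 ζφ, A ψ₀⟫ =
        ⟪τ φ₀, ζψ⟫ - ⟪ζφ, τ ψ₀⟫ := by
  intro φ₀ ψ₀ ζφ ζψ
  have h1 : ∀ (x : D) (ζ : h), ⟪G0 ζ, A x⟫ = ⟪ζ, τ x⟫ := by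
    intro x ζ
    rw [hG0]
    have hx : (⟨Ainv (A x), hAinvmem _⟩ : D) = x := Subtype.ext (hAinv2 x)
    rw [hx]
  have h2 : ⟪A φ₀, G0 ζψ⟫ = ⟪τ φ₀, ζψ⟫ := by
    rw [← inner_conj_symm, h1 φ₀ ζψ, inner_conj_symm]
  rw [inner_add_right, inner_add_left, hsym φ₀ ψ₀, h2, h1 ψ₀ ζφ]
  ring
end

section
/- Let Π : h → h be an orthogonal projection with range h₀, Θ : D(Θ) ⊆ h₀ → h₀ self-adjoint, and Γ_{z,Π,Θ} := Θ + Π Γ_z Π on D(Θ). Then every non-real complex number z ∈ ρ(A₀) satisfies 0 ∈ ρ(Γ_{z,Π,Θ}); in particular the set Z_{Π,Θ} := {z ∈ ρ(A₀) : 0 ∈ ρ(Γ_{z,Π,Θ})} contains ℂ ∖ ℝ. -/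
/-!
For non-real `z`, the resolvent identity gives `G₀ - G_z = z R₀ G_z`, hence
`⟪ζ, Γ_z ζ⟫ = z ‖G_z ζ‖² + |z|² ⟪R₀ G_z ζ, G_z ζ⟫` and, `R₀` being self-adjoint,
`Im ⟪ζ, Γ_z ζ⟫ = Im z · ‖G_z ζ‖²`. As the adjoint of the bounded surjection `τ R_z̄`, `G_z` is
bounded below, so `|Im ⟪ζ, Γ_z ζ⟫| ≥ m ‖ζ‖²` with `m > 0`. The symmetric `Θ` does not change
imaginary parts on its domain, so `T = Θ + Π Γ_z Π` is bounded below as well; `T` has closed range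
because `Θ` is closed, and the same estimate for `Θ + Π Γ_z* Π` leaves no nonzero vector of `h₀`
orthogonal to that range. Thus `T : D(Θ) → h₀` is bijective, and `T⁻¹ Π` is the bounded inverse.
-/

local notation "⟪" x ", " y "⟫" => @inner ℂ _ _ x y

open ContinuousLinearMap Filter Topology

theorem mul_norm_le_of_le_abs_im_inner {E : Type*} [NormedAddCommGroup E]
    [InnerProductSpace ℂ E] {m : ℝ} {x y : E} (h : m * ‖x‖ ^ 2 ≤ |(⟪x, y⟫).im|) :
    m * ‖x‖ ≤ ‖y‖ := by
  rcases (norm_nonneg x).eq_or_lt with hx | hx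
  · simp [← hx]
  refine le_of_mul_le_mul_right ?_ hx
  calc m * ‖x‖ * ‖x‖ = m * ‖x‖ ^ 2 := by ring
    _ ≤ ‖⟪x, y⟫‖ := h.trans (Complex.abs_im_le_norm _)
    _ ≤ ‖y‖ * ‖x‖ := by rw [mul_comm]; exact norm_inner_le_norm x y

theorem ContinuousLinearMap.exists_norm_le_mul_norm_adjoint_apply {𝕜 E F : Type*} [RCLike 𝕜]
    [NormedAddCommGroup E] [InnerProductSpace 𝕜 E] [CompleteSpace E]
    [NormedAddCommGroup F] [InnerProductSpace 𝕜 F] [CompleteSpace F]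
    (S : E →L[𝕜] F) (hS : Function.Surjective S) :
    ∃ c > 0, ∀ ζ, ‖ζ‖ ≤ c * ‖adjoint S ζ‖ := by
  obtain ⟨c, hc, hpre⟩ := S.exists_preimage_norm_le hS
  refine ⟨c, hc, fun ζ => ?_⟩
  obtain ⟨y, rfl, hy⟩ := hpre ζ
  rcases (norm_nonneg (S y)).eq_or_lt with hζ | hζ
  · rw [← hζ]; positivity
  refine le_of_mul_le_mul_right ?_ hζ
  calc ‖S y‖ * ‖S y‖ = ‖inner 𝕜 (adjoint S (S y)) y‖ := by
        rw [adjoint_inner_left, ← inner_self_re_eq_norm, inner_self_eq_norm_mul_norm]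
    _ ≤ ‖adjoint S (S y)‖ * (c * ‖S y‖) :=
        (norm_inner_le_norm _ _).trans (by gcongr)
    _ = c * ‖adjoint S (S y)‖ * ‖S y‖ := by ring

theorem ContinuousLinearMap.abs_im_inner_adjoint_apply_self {E : Type*} [NormedAddCommGroup E]
    [InnerProductSpace ℂ E] [CompleteSpace E] (K : E →L[ℂ] E) (ζ : E) :
    |(⟪ζ, adjoint K ζ⟫).im| = |(⟪ζ, K ζ⟫).im| := by
  rw [← inner_conj_symm, adjoint_inner_left, Complex.conj_im, abs_neg]

section SelfAdjointIn

variable {E : Type*} [NormedAddCommGroup E] [InnerProductSpace ℂ E]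

/-- `mem_of_inner` is the inclusion `D(Θ*) ⊆ D(Θ)`. -/
structure IsSelfAdjointIn (V : Submodule ℂ E) {D : Submodule ℂ E} (Θ : D →ₗ[ℂ] E) : Prop where
  domain_le : D ≤ V
  le_closure_domain : (V : Set E) ⊆ closure D
  map_mem : ∀ x, Θ x ∈ V
  inner_map : ∀ x y : D, ⟪Θ x, (y : E)⟫ = ⟪(x : E), Θ y⟫
  mem_of_inner : ∀ ζ η : E, ζ ∈ V → η ∈ V → (∀ x : D, ⟪ζ, Θ x⟫ = ⟪η, (x : E)⟫) → ζ ∈ D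

namespace IsSelfAdjointIn

variable {V D : Submodule ℂ E} {Θ : D →ₗ[ℂ] E}

theorem im_inner_map_self (hΘ : IsSelfAdjointIn V Θ) (x : D) : (⟪(x : E), Θ x⟫).im = 0 := by
  rw [← Complex.conj_eq_iff_im, inner_conj_symm, hΘ.inner_map]

theorem map_eq_of_inner (hΘ : IsSelfAdjointIn V Θ) {ζ η : E} (hζ : ζ ∈ D) (hη : η ∈ V)
    (h : ∀ x : D, ⟪ζ, Θ x⟫ = ⟪η, (x : E)⟫) : Θ ⟨ζ, hζ⟩ = η := by
  have hV : Θ ⟨ζ, hζ⟩ - η ∈ V := V.sub_mem (hΘ.map_mem _) hη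
  have hD : Θ ⟨ζ, hζ⟩ - η ∈ Dᗮ := by
    rw [Submodule.mem_orthogonal']
    intro x hx
    rw [inner_sub_left, hΘ.inner_map ⟨ζ, hζ⟩ ⟨x, hx⟩, h, sub_self]
  have hcl : Θ ⟨ζ, hζ⟩ - η ∈ D.topologicalClosure := hΘ.le_closure_domain hV
  rw [← Submodule.orthogonal_closure] at hD
  exact sub_eq_zero.mp <|
    (Submodule.mem_bot ℂ).mp (D.topologicalClosure.inf_orthogonal_eq_bot ▸ ⟨hcl, hD⟩)

theorem mem_and_map_eq_of_tendsto (hΘ : IsSelfAdjointIn V Θ) (hV : IsClosed (V : Set E))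
    {xs : ℕ → D} {ζ η : E} (hx : Tendsto (fun n => (xs n : E)) atTop (𝓝 ζ))
    (hΘx : Tendsto (fun n => Θ (xs n)) atTop (𝓝 η)) : ∃ hζ : ζ ∈ D, Θ ⟨ζ, hζ⟩ = η := by
  have hζV : ζ ∈ V := hV.mem_of_tendsto hx (.of_forall fun n => hΘ.domain_le (xs n).2)
  have hηV : η ∈ V := hV.mem_of_tendsto hΘx (.of_forall fun n => hΘ.map_mem _)
  have hinner : ∀ x : D, ⟪ζ, Θ x⟫ = ⟪η, (x : E)⟫ := fun x =>
    tendsto_nhds_unique ((hx.inner tendsto_const_nhds).congr fun n => (hΘ.inner_map _ _).symm)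
      (hΘx.inner tendsto_const_nhds)
  have hζ := hΘ.mem_of_inner ζ η hζV hηV hinner
  exact ⟨hζ, hΘ.map_eq_of_inner hζ hηV hinner⟩

end IsSelfAdjointIn

/-- With `K = Γ_z` this is the paper's `Γ_{z,Π,Θ} = Θ + Π Γ_z Π`. -/
def addCompression (P : E →L[ℂ] E) {D : Submodule ℂ E} (Θ : D →ₗ[ℂ] E) (K : E →L[ℂ] E) :
    D →ₗ[ℂ] E :=
  Θ + ((P ∘L K ∘L P : E →L[ℂ] E) : E →ₗ[ℂ] E) ∘ₗ D.subtype

variable {P : E →L[ℂ] E} {D : Submodule ℂ E} {Θ : D →ₗ[ℂ] E} {K : E →L[ℂ] E}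

@[simp]
theorem addCompression_apply (x : D) : addCompression P Θ K x = Θ x + P (K (P x)) := rfl

variable [CompleteSpace E]

theorem IsStarProjection.apply_eq_of_mem_range (hP : IsStarProjection P) {ξ : E}
    (hξ : ξ ∈ P.range) : P ξ = ξ :=
  LinearMap.IsIdempotentElem.mem_range_iff
    (isIdempotentElem_toLinearMap_iff.mpr hP.isIdempotentElem) |>.mp hξ

namespace IsSelfAdjointIn

theorem mul_norm_le_addCompression (hΘ : IsSelfAdjointIn P.range Θ)
    (hP : IsStarProjection P) {m : ℝ} (hK : ∀ ζ, m * ‖ζ‖ ^ 2 ≤ |(⟪ζ, K ζ⟫).im|) (x : D) :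
    m * ‖(x : E)‖ ≤ ‖addCompression P Θ K x‖ := by
  have hPx : P x = x := hP.apply_eq_of_mem_range (hΘ.domain_le x.2)
  apply mul_norm_le_of_le_abs_im_inner
  rw [addCompression_apply, inner_add_right, Complex.add_im, hΘ.im_inner_map_self, zero_add,
    ← coe_coe P, ← hP.isSelfAdjoint.isSymmetric, coe_coe, hPx]
  exact hK x

theorem injective_addCompression (hΘ : IsSelfAdjointIn P.range Θ)
    (hP : IsStarProjection P) {m : ℝ} (hm : 0 < m) (hK : ∀ ζ, m * ‖ζ‖ ^ 2 ≤ |(⟪ζ, K ζ⟫).im|) :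
    Function.Injective (addCompression P Θ K) := by
  refine (injective_iff_map_eq_zero _).mpr fun x hx => ?_
  have := hΘ.mul_norm_le_addCompression hP hK x
  rw [hx, norm_zero] at this
  exact_mod_cast norm_le_zero_iff.mp (nonpos_of_mul_nonpos_right this hm)

theorem isClosed_range_addCompression (hΘ : IsSelfAdjointIn P.range Θ)
    (hP : IsStarProjection P) {m : ℝ} (hm : 0 < m)
    (hT : ∀ x : D, m * ‖(x : E)‖ ≤ ‖addCompression P Θ K x‖) :
    IsClosed (LinearMap.range (addCompression P Θ K) : Set E) := by
  refine isClosed_of_closure_subset fun η hη => ?_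
  obtain ⟨s, hs, hsη⟩ := mem_closure_iff_seq_limit.mp hη
  choose xs hxs using hs
  have hcauchy : CauchySeq (fun n => (xs n : E)) := by
    refine Metric.cauchySeq_iff.mpr fun ε hε => ?_
    obtain ⟨N, hN⟩ := Metric.cauchySeq_iff.mp hsη.cauchySeq (m * ε) (by positivity)
    refine ⟨N, fun p hp q hq => ?_⟩
    have hpq := hT (xs p - xs q)
    rw [map_sub, hxs, hxs, Submodule.coe_sub] at hpq
    rw [dist_eq_norm]
    exact lt_of_mul_lt_mul_left (hpq.trans_lt (dist_eq_norm (s p) (s q) ▸ hN p hp q hq)) hm.le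
  obtain ⟨ζ, hζ⟩ := cauchySeq_tendsto_of_complete hcauchy
  have hΘx : Tendsto (fun n => Θ (xs n)) atTop (𝓝 (η - P (K (P ζ)))) :=
    (hsη.sub (((P ∘L K ∘L P).continuous.tendsto ζ).comp hζ)).congr fun n => by
      simp [← hxs n]
  obtain ⟨hζD, hΘζ⟩ :=
    hΘ.mem_and_map_eq_of_tendsto hP.isIdempotentElem.isClosed_range hζ hΘx
  exact ⟨⟨ζ, hζD⟩, by rw [addCompression_apply, hΘζ]; abel⟩

theorem eq_zero_of_inner_addCompression_eq_zero (hΘ : IsSelfAdjointIn P.range Θ)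
    (hP : IsStarProjection P) {m : ℝ} (hm : 0 < m)
    (hK : ∀ ζ, m * ‖ζ‖ ^ 2 ≤ |(⟪ζ, K ζ⟫).im|) {ξ : E} (hξ : ξ ∈ P.range)
    (h : ∀ x : D, ⟪ξ, addCompression P Θ K x⟫ = 0) : ξ = 0 := by
  have hinner : ∀ x : D, ⟪ξ, Θ x⟫ = ⟪-P (adjoint K (P ξ)), (x : E)⟫ := fun x => by
    have hadj : ⟪ξ, P (K (P x))⟫ = ⟪P (adjoint K (P ξ)), (x : E)⟫ := by
      simpa [adjoint_comp, hP.isSelfAdjoint.adjoint_eq] using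
        (adjoint_inner_left (P ∘L K ∘L P) x ξ).symm
    rw [inner_neg_left, ← hadj, eq_neg_iff_add_eq_zero, ← inner_add_right, ← h x,
      addCompression_apply]
  have hmem : -P (adjoint K (P ξ)) ∈ P.range := neg_mem (LinearMap.mem_range_self _ _)
  have hξD := hΘ.mem_of_inner ξ _ hξ hmem hinner
  have hΘξ := hΘ.map_eq_of_inner hξD hmem hinner
  have hK' : ∀ ζ, m * ‖ζ‖ ^ 2 ≤ |(⟪ζ, adjoint K ζ⟫).im| := fun ζ =>
    (K.abs_im_inner_adjoint_apply_self ζ).symm ▸ hK ζ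
  have hT' := hΘ.mul_norm_le_addCompression hP hK' ⟨ξ, hξD⟩
  rw [addCompression_apply, hΘξ, hP.apply_eq_of_mem_range hξ, neg_add_cancel,
    norm_zero] at hT'
  exact norm_le_zero_iff.mp (nonpos_of_mul_nonpos_right hT' hm)

theorem range_addCompression (hΘ : IsSelfAdjointIn P.range Θ) (hP : IsStarProjection P)
    {m : ℝ} (hm : 0 < m) (hK : ∀ ζ, m * ‖ζ‖ ^ 2 ≤ |(⟪ζ, K ζ⟫).im|) :
    LinearMap.range (addCompression P Θ K) = P.range := by
  set N := LinearMap.range (addCompression P Θ K)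
  have hle : N ≤ P.range := by
    rintro _ ⟨x, rfl⟩
    exact add_mem (hΘ.map_mem x) (LinearMap.mem_range_self _ _)
  refine le_antisymm hle fun η hη => ?_
  have hN : IsClosed (N : Set E) :=
    hΘ.isClosed_range_addCompression hP hm (hΘ.mul_norm_le_addCompression hP hK)
  have : CompleteSpace N := hN.completeSpace_coe
  obtain ⟨a, ha, b, hb, rfl⟩ := N.exists_add_mem_mem_orthogonal η
  have hbP : b ∈ P.range := by simpa using sub_mem hη (hle ha)
  have hb0 : b = 0 := hΘ.eq_zero_of_inner_addCompression_eq_zero hP hm hK hbP fun x =>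
    N.inner_left_of_mem_orthogonal (LinearMap.mem_range_self _ x) hb
  rwa [hb0, add_zero]

theorem exists_inverse_addCompression (hΘ : IsSelfAdjointIn P.range Θ)
    (hP : IsStarProjection P) {m : ℝ} (hm : 0 < m) (hK : ∀ ζ, m * ‖ζ‖ ^ 2 ≤ |(⟪ζ, K ζ⟫).im|) :
    ∃ (B : E →L[ℂ] E) (hB : ∀ ζ, B ζ ∈ D),
      (∀ ζ ∈ Set.range P, Θ ⟨B ζ, hB ζ⟩ + P (K (P (B ζ))) = ζ) ∧
      ∀ x : D, B (Θ x + P (K (P x))) = x := by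
  set T := addCompression P Θ K
  have hrange := hΘ.range_addCompression hP hm hK
  let e := LinearEquiv.ofInjective T (hΘ.injective_addCompression hP hm hK)
  let Q : E →ₗ[ℂ] LinearMap.range T :=
    (P : E →ₗ[ℂ] E).codRestrict _ fun ξ => hrange ▸ LinearMap.mem_range_self _ ξ
  have hTe : ∀ ξ, T (e.symm (Q ξ)) = P ξ := fun ξ => LinearEquiv.ofInjective_symm_apply T (Q ξ)
  have hbound : ∀ ξ, ‖(D.subtype ∘ₗ e.symm ∘ₗ Q) ξ‖ ≤ ‖P‖ / m * ‖ξ‖ := fun ξ => by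
    rw [div_mul_eq_mul_div, le_div_iff₀ hm, mul_comm]
    calc m * ‖((e.symm (Q ξ) : D) : E)‖ ≤ ‖T (e.symm (Q ξ))‖ :=
          hΘ.mul_norm_le_addCompression hP hK _
      _ = ‖P ξ‖ := by rw [hTe]
      _ ≤ ‖P‖ * ‖ξ‖ := P.le_opNorm ξ
  refine ⟨(D.subtype ∘ₗ e.symm ∘ₗ Q).mkContinuous _ hbound, fun ξ => (e.symm (Q ξ)).2,
    fun ζ hζ => (hTe ζ).trans (hP.apply_eq_of_mem_range hζ), fun x => ?_⟩
  have hQ : Q (T x) = e x := Subtype.ext (hP.apply_eq_of_mem_range (hrange ▸ ⟨x, rfl⟩))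
  change ((e.symm (Q (T x)) : D) : E) = x
  rw [hQ, e.symm_apply_apply]

end IsSelfAdjointIn

end SelfAdjointIn

section Krein

variable {H h : Type*} [NormedAddCommGroup H] [InnerProductSpace ℂ H] [CompleteSpace H]
  [NormedAddCommGroup h] [InnerProductSpace ℂ h]

/-- `R z = (z - A)⁻¹` for `z` in the resolvent set `ρA` of the operator `A` with domain `D`. -/
structure IsResolventFamily (D : Submodule ℂ H) (A : D →ₗ[ℂ] H) (ρA : Set ℂ)
    (R : ℂ → H →L[ℂ] H) : Prop where
  conj_mem : ∀ z ∈ ρA, starRingEnd ℂ z ∈ ρA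
  mem : ∀ z ∈ ρA, ∀ y, R z y ∈ D
  smul_sub_map : ∀ z (hz : z ∈ ρA) y, z • R z y - A ⟨R z y, mem z hz y⟩ = y
  apply_smul_sub : ∀ z ∈ ρA, ∀ x : D, R z (z • (x : H) - A x) = x
  adjoint_eq : ∀ z ∈ ρA, adjoint (R z) = R (starRingEnd ℂ z)

namespace IsResolventFamily

variable {D : Submodule ℂ H} {A : D →ₗ[ℂ] H} {ρA : Set ℂ} {R : ℂ → H →L[ℂ] H} {z w : ℂ}

theorem A_R_apply (hR : IsResolventFamily D A ρA R) (hz : z ∈ ρA) (y : H) :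
    A ⟨R z y, hR.mem z hz y⟩ = z • R z y - y :=
  (sub_sub_cancel _ _).symm.trans (congrArg (z • R z y - ·) (hR.smul_sub_map z hz y))

theorem A_R_zero_apply (hR : IsResolventFamily D A ρA R) (h0 : 0 ∈ ρA) (y : H) :
    A ⟨R 0 y, hR.mem 0 h0 y⟩ = -y := by
  simpa using hR.A_R_apply h0 y

theorem isSelfAdjoint_R_zero (hR : IsResolventFamily D A ρA R) (h0 : 0 ∈ ρA) :
    IsSelfAdjoint (R 0) := by
  simpa [isSelfAdjoint_iff'] using hR.adjoint_eq 0 h0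

theorem inner_R_zero_left (hR : IsResolventFamily D A ρA R) (h0 : 0 ∈ ρA) (u v : H) :
    ⟪R 0 u, v⟫ = ⟪u, R 0 v⟫ :=
  (hR.isSelfAdjoint_R_zero h0).isSymmetric u v

theorem R_zero_sub_R_apply (hR : IsResolventFamily D A ρA R) (h0 : 0 ∈ ρA) (hw : w ∈ ρA)
    (y : H) : R 0 y - R w y = w • R w (R 0 y) := by
  set x : D := ⟨R 0 y, hR.mem 0 h0 y⟩ - ⟨R w y, hR.mem w hw y⟩
  have hAx : A x = -(w • R w y) := by
    rw [map_sub, hR.A_R_zero_apply h0, hR.A_R_apply hw]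
    abel
  calc R 0 y - R w y = R w (w • (x : H) - A x) := (hR.apply_smul_sub w hw x).symm
    _ = R w (w • R 0 y) := by
      rw [hAx, Submodule.coe_sub, smul_sub, sub_neg_eq_add, sub_add_cancel]
    _ = w • R w (R 0 y) := map_smul _ _ _

variable {τ : D →ₗ[ℂ] h} {G : ℂ → h →L[ℂ] H}

/-- `G z = (τ R_{z̄})*`. -/
def IsAdjointTraceResolvent (hR : IsResolventFamily D A ρA R) (τ : D →ₗ[ℂ] h)
    (G : ℂ → h →L[ℂ] H) : Prop :=
  ∀ z (hz : z ∈ ρA) (ζ : h) (y : H),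
    ⟪G z ζ, y⟫ = ⟪ζ, τ ⟨R (starRingEnd ℂ z) y, hR.mem _ (hR.conj_mem z hz) y⟩⟫

theorem inner_τ_eq_inner_G {hR : IsResolventFamily D A ρA R}
    (hG : hR.IsAdjointTraceResolvent τ G) (hw : w ∈ ρA) (η : h) (x : D) :
    ⟪η, τ x⟫ = ⟪G w η, starRingEnd ℂ w • (x : H) - A x⟫ := by
  rw [hG w hw]
  congr 2
  exact Subtype.ext (hR.apply_smul_sub _ (hR.conj_mem w hw) x).symm

theorem G_zero_sub_G {hR : IsResolventFamily D A ρA R} (hG : hR.IsAdjointTraceResolvent τ G)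
    (h0 : 0 ∈ ρA) (hw : w ∈ ρA) (ζ : h) : G 0 ζ - G w ζ = w • R 0 (G w ζ) := by
  have hw' := hR.conj_mem w hw
  refine ext_inner_right ℂ fun v => ?_
  have hdiff : (⟨R 0 v, hR.mem 0 h0 v⟩ - ⟨R _ v, hR.mem _ hw' v⟩ : D)
      = starRingEnd ℂ w • ⟨R _ (R 0 v), hR.mem _ hw' _⟩ :=
    Subtype.ext (hR.R_zero_sub_R_apply h0 hw' v)
  have hG0 : ⟪G 0 ζ, v⟫ = ⟪ζ, τ ⟨R 0 v, hR.mem 0 h0 v⟩⟫ := by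
    rw [hG 0 h0]
    simp only [map_zero]
  rw [inner_sub_left, hG0, hG w hw, ← inner_sub_right, ← map_sub, hdiff, map_smul,
    inner_smul_right, ← hG w hw, ← hR.inner_R_zero_left h0, inner_smul_left]

theorem A_G_zero_sub_G {hR : IsResolventFamily D A ρA R} (hG : hR.IsAdjointTraceResolvent τ G)
    (h0 : 0 ∈ ρA) (hw : w ∈ ρA) (ζ : h) (hζ : G 0 ζ - G w ζ ∈ D) :
    A ⟨G 0 ζ - G w ζ, hζ⟩ = -(w • G w ζ) := by
  have : (⟨G 0 ζ - G w ζ, hζ⟩ : D) = w • ⟨R 0 (G w ζ), hR.mem 0 h0 _⟩ :=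
    Subtype.ext (G_zero_sub_G hG h0 hw ζ)
  rw [this, map_smul, hR.A_R_zero_apply h0, smul_neg]

theorem inner_Γ {hR : IsResolventFamily D A ρA R} (hG : hR.IsAdjointTraceResolvent τ G)
    (h0 : 0 ∈ ρA) {hsub : ∀ z ∈ ρA, ∀ ζ, G 0 ζ - G z ζ ∈ D} {Γ : ℂ → h →L[ℂ] h}
    (hΓ : ∀ z (hz : z ∈ ρA) ζ, Γ z ζ = τ ⟨G 0 ζ - G z ζ, hsub z hz ζ⟩) (hw : w ∈ ρA)
    (η ζ : h) : ⟪η, Γ w ζ⟫ = w * ⟪G 0 η, G w ζ⟫ := by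
  rw [hΓ w hw, inner_τ_eq_inner_G hG h0, A_G_zero_sub_G hG h0 hw]
  simp

theorem im_inner_Γ_self {hR : IsResolventFamily D A ρA R} (hG : hR.IsAdjointTraceResolvent τ G)
    (h0 : 0 ∈ ρA) {hsub : ∀ z ∈ ρA, ∀ ζ, G 0 ζ - G z ζ ∈ D} {Γ : ℂ → h →L[ℂ] h}
    (hΓ : ∀ z (hz : z ∈ ρA) ζ, Γ z ζ = τ ⟨G 0 ζ - G z ζ, hsub z hz ζ⟩) (hw : w ∈ ρA)
    (ζ : h) : (⟪ζ, Γ w ζ⟫).im = w.im * ‖G w ζ‖ ^ 2 := by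
  have hG0 : G 0 ζ = G w ζ + w • R 0 (G w ζ) := by
    rw [← G_zero_sub_G hG h0 hw, add_sub_cancel]
  have hreal : (⟪R 0 (G w ζ), G w ζ⟫).im = 0 := by
    rw [← Complex.conj_eq_iff_im, inner_conj_symm, hR.inner_R_zero_left h0]
  rw [inner_Γ hG h0 hΓ hw, hG0, inner_add_left, inner_smul_left, inner_self_eq_norm_sq_to_K,
    mul_add, ← mul_assoc, Complex.mul_conj, Complex.add_im, Complex.im_ofReal_mul, hreal,
    mul_zero, add_zero]
  exact_mod_cast Complex.im_mul_ofReal _ _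

theorem norm_τ_R_apply_le (hR : IsResolventFamily D A ρA R) {C : ℝ}
    (hτ : ∀ x : D, ‖τ x‖ ≤ C * (‖(x : H)‖ + ‖A x‖)) (hz : z ∈ ρA) (y : H) :
    ‖τ ⟨R z y, hR.mem z hz y⟩‖ ≤ |C| * (‖R z‖ + (‖z‖ * ‖R z‖ + 1)) * ‖y‖ := by
  have hRy := (R z).le_opNorm y
  have hARy : ‖A ⟨R z y, hR.mem z hz y⟩‖ ≤ ‖z‖ * (‖R z‖ * ‖y‖) + ‖y‖ := by
    rw [hR.A_R_apply hz]
    refine (norm_sub_le _ _).trans ?_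
    rw [norm_smul]
    gcongr
  calc ‖τ ⟨R z y, _⟩‖ ≤ C * (‖R z y‖ + ‖A ⟨R z y, _⟩‖) := hτ _
    _ ≤ |C| * (‖R z y‖ + ‖A ⟨R z y, _⟩‖) := by gcongr; exact le_abs_self C
    _ ≤ |C| * (‖R z‖ * ‖y‖ + (‖z‖ * (‖R z‖ * ‖y‖) + ‖y‖)) := by gcongr
    _ = |C| * (‖R z‖ + (‖z‖ * ‖R z‖ + 1)) * ‖y‖ := by ring

theorem exists_norm_le_mul_norm_G [CompleteSpace h] {hR : IsResolventFamily D A ρA R} {C : ℝ}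
    (hτ : ∀ x : D, ‖τ x‖ ≤ C * (‖(x : H)‖ + ‖A x‖)) (hτsurj : Function.Surjective τ)
    (hG : hR.IsAdjointTraceResolvent τ G) (hw : w ∈ ρA) :
    ∃ c > 0, ∀ ζ, ‖ζ‖ ≤ c * ‖G w ζ‖ := by
  have hw' := hR.conj_mem w hw
  let S : H →L[ℂ] h :=
    (τ ∘ₗ (R (starRingEnd ℂ w) : H →ₗ[ℂ] H).codRestrict D (hR.mem _ hw')).mkContinuous _
      (hR.norm_τ_R_apply_le hτ hw')
  have hS : Function.Surjective S := fun ξ => by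
    obtain ⟨x, rfl⟩ := hτsurj ξ
    exact ⟨starRingEnd ℂ w • (x : H) - A x,
      congrArg τ (Subtype.ext (hR.apply_smul_sub _ hw' x))⟩
  have hGS : G w = adjoint S := (eq_adjoint_iff _ _).mpr (hG w hw)
  simpa [hGS] using S.exists_norm_le_mul_norm_adjoint_apply hS

theorem exists_le_abs_im_inner_Γ [CompleteSpace h] {hR : IsResolventFamily D A ρA R} {C : ℝ}
    (hτ : ∀ x : D, ‖τ x‖ ≤ C * (‖(x : H)‖ + ‖A x‖)) (hτsurj : Function.Surjective τ)
    (hG : hR.IsAdjointTraceResolvent τ G) (h0 : 0 ∈ ρA)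
    {hsub : ∀ z ∈ ρA, ∀ ζ, G 0 ζ - G z ζ ∈ D} {Γ : ℂ → h →L[ℂ] h}
    (hΓ : ∀ z (hz : z ∈ ρA) ζ, Γ z ζ = τ ⟨G 0 ζ - G z ζ, hsub z hz ζ⟩) (hw : w ∈ ρA)
    (hwim : w.im ≠ 0) : ∃ m > 0, ∀ ζ, m * ‖ζ‖ ^ 2 ≤ |(⟪ζ, Γ w ζ⟫).im| := by
  obtain ⟨c, hc, hGc⟩ := exists_norm_le_mul_norm_G hτ hτsurj hG hw
  refine ⟨|w.im| / c ^ 2, by positivity, fun ζ => ?_⟩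
  rw [im_inner_Γ_self hG h0 hΓ hw, abs_mul, abs_of_nonneg (sq_nonneg ‖G w ζ‖), div_mul_eq_mul_div,
    div_le_iff₀ (by positivity)]
  calc |w.im| * ‖ζ‖ ^ 2 ≤ |w.im| * (c * ‖G w ζ‖) ^ 2 := by gcongr; exact hGc ζ
    _ = |w.im| * ‖G w ζ‖ ^ 2 * c ^ 2 := by ring

end IsResolventFamily

end Krein

theorem krein_nonreal_subset_Z_general
    {H h : Type*}
    [NormedAddCommGroup H] [InnerProductSpace ℂ H] [CompleteSpace H]
    [NormedAddCommGroup h] [InnerProductSpace ℂ h] [CompleteSpace h]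
    (D : Submodule ℂ H)
    (A : D →ₗ[ℂ] H)
    (ρA : Set ℂ)
    (hρconj : ∀ z ∈ ρA, (starRingEnd ℂ) z ∈ ρA)
    (R : ℂ → H →L[ℂ] H)
    (hmem : ∀ z, z ∈ ρA → ∀ y : H, R z y ∈ D)
    (hres1 : ∀ z (hz : z ∈ ρA) (y : H), z • R z y - A ⟨R z y, hmem z hz y⟩ = y)
    (hres2 : ∀ z ∈ ρA, ∀ x : D, R z (z • (x : H) - A x) = (x : H))
    (hRadj : ∀ z ∈ ρA, ContinuousLinearMap.adjoint (R z) = R ((starRingEnd ℂ) z))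
    (τ : D →ₗ[ℂ] h) (C : ℝ)
    (hτ : ∀ x : D, ‖τ x‖ ≤ C * (‖(x : H)‖ + ‖A x‖))
    (G : ℂ → h →L[ℂ] H)
    (hG : ∀ z (hz : z ∈ ρA) (ζ : h) (y : H),
      ⟪G z ζ, y⟫ = ⟪ζ, τ ⟨R ((starRingEnd ℂ) z) y, hmem _ (hρconj z hz) y⟩⟫)
    (hτsurj : Function.Surjective τ)
    (h0 : (0 : ℂ) ∈ ρA)
    (hsub : ∀ z (hz : z ∈ ρA) (ζ : h), G 0 ζ - G z ζ ∈ D)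
    (Γ : ℂ → h →L[ℂ] h)
    (hΓ : ∀ z (hz : z ∈ ρA) (ζ : h), Γ z ζ = τ ⟨G 0 ζ - G z ζ, hsub z hz ζ⟩)
    (Pr : h →L[ℂ] h) (hPrproj : Pr.comp Pr = Pr) (hPrsa : IsSelfAdjoint Pr)
    (DΘ : Submodule ℂ h) (hDΘ : (DΘ : Set h) ⊆ Set.range ⇑Pr)
    (hDΘdense : Set.range ⇑Pr ⊆ closure (DΘ : Set h))
    (Θ : DΘ →ₗ[ℂ] h)
    (hΘran : ∀ x : DΘ, Θ x ∈ Set.range ⇑Pr)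
    (hΘsym : ∀ x y : DΘ, ⟪Θ x, (y : h)⟫ = ⟪(x : h), Θ y⟫)
    (hΘsa : ∀ ζ η : h, ζ ∈ Set.range ⇑Pr → η ∈ Set.range ⇑Pr →
      (∀ x : DΘ, ⟪ζ, Θ x⟫ = ⟪η, (x : h)⟫) → ζ ∈ DΘ)
    (hρ : ∀ z : ℂ, z.im ≠ 0 → z ∈ ρA) :
    ∀ z : ℂ, z.im ≠ 0 →
      ∃ (B : h →L[ℂ] h) (hB : ∀ ζ : h, B ζ ∈ DΘ),
        (∀ ζ ∈ Set.range ⇑Pr, Θ ⟨B ζ, hB ζ⟩ + Pr (Γ z (Pr (B ζ))) = ζ) ∧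
        ∀ x : DΘ, B (Θ x + Pr (Γ z (Pr (x : h)))) = (x : h) := by
  intro z hz
  have hR : IsResolventFamily D A ρA R := ⟨hρconj, hmem, hres1, hres2, hRadj⟩
  have hG' : hR.IsAdjointTraceResolvent τ G := hG
  obtain ⟨m, hm, hK⟩ := IsResolventFamily.exists_le_abs_im_inner_Γ hτ hτsurj hG' h0 hΓ (hρ z hz) hz
  have hΘ : IsSelfAdjointIn Pr.range Θ := ⟨hDΘ, hDΘdense, hΘran, hΘsym, hΘsa⟩
  exact hΘ.exists_inverse_addCompression ⟨hPrproj, hPrsa⟩ hm hK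

/-- for `Pr` an orthogonal projection with range `h₀`, `Θ` a
self-adjoint operator in `h₀` and `Γ_{z,Pr,Θ} := Θ + Pr Γ_z Pr`, every non-real
`z` (which automatically lies in `ρ(A₀)`) satisfies `0 ∈ ρ(Γ_{z,Pr,Θ})`, i.e.
`ℂ ∖ ℝ ⊆ Z_{Pr,Θ}`. -/
theorem krein_nonreal_subset_Z
    {H h : Type*}
    [NormedAddCommGroup H] [InnerProductSpace ℂ H] [CompleteSpace H]
    [NormedAddCommGroup h] [InnerProductSpace ℂ h] [CompleteSpace h]
    (D : Submodule ℂ H) (hDdense : Dense (D : Set H))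
    (A : D →ₗ[ℂ] H)
    (hsym : ∀ x y : D, ⟪A x, (y : H)⟫ = ⟪(x : H), A y⟫)
    (ρA : Set ℂ)
    (hρconj : ∀ z ∈ ρA, (starRingEnd ℂ) z ∈ ρA)
    (R : ℂ → H →L[ℂ] H)
    (hmem : ∀ z, z ∈ ρA → ∀ y : H, R z y ∈ D)
    (hres1 : ∀ z (hz : z ∈ ρA) (y : H), z • R z y - A ⟨R z y, hmem z hz y⟩ = y)
    (hres2 : ∀ z ∈ ρA, ∀ x : D, R z (z • (x : H) - A x) = (x : H))
    (hRadj : ∀ z ∈ ρA, ContinuousLinearMap.adjoint (R z) = R ((starRingEnd ℂ) z))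
    (τ : D →ₗ[ℂ] h) (C : ℝ)
    (hτ : ∀ x : D, ‖τ x‖ ≤ C * (‖(x : H)‖ + ‖A x‖))
    (G : ℂ → h →L[ℂ] H)
    (hG : ∀ z (hz : z ∈ ρA) (ζ : h) (y : H),
      ⟪G z ζ, y⟫ = ⟪ζ, τ ⟨R ((starRingEnd ℂ) z) y, hmem _ (hρconj z hz) y⟩⟫)
    (hτsurj : Function.Surjective τ)
    (hker : Dense ((fun x : D => (x : H)) '' {x : D | τ x = 0}))
    (h0 : (0 : ℂ) ∈ ρA)
    (hsub : ∀ z (hz : z ∈ ρA) (ζ : h), G 0 ζ - G z ζ ∈ D)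
    (Γ : ℂ → h →L[ℂ] h)
    (hΓ : ∀ z (hz : z ∈ ρA) (ζ : h), Γ z ζ = τ ⟨G 0 ζ - G z ζ, hsub z hz ζ⟩)
    (Pr : h →L[ℂ] h) (hPrproj : Pr.comp Pr = Pr) (hPrsa : IsSelfAdjoint Pr)
    (DΘ : Submodule ℂ h) (hDΘ : (DΘ : Set h) ⊆ Set.range ⇑Pr)
    (hDΘdense : Set.range ⇑Pr ⊆ closure (DΘ : Set h))
    (Θ : DΘ →ₗ[ℂ] h)
    (hΘran : ∀ x : DΘ, Θ x ∈ Set.range ⇑Pr)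
    (hΘsym : ∀ x y : DΘ, ⟪Θ x, (y : h)⟫ = ⟪(x : h), Θ y⟫)
    (hΘsa : ∀ ζ η : h, ζ ∈ Set.range ⇑Pr → η ∈ Set.range ⇑Pr →
      (∀ x : DΘ, ⟪ζ, Θ x⟫ = ⟪η, (x : h)⟫) → ζ ∈ DΘ)
    (hρ : ∀ z : ℂ, z.im ≠ 0 → z ∈ ρA) :
    ∀ z : ℂ, z.im ≠ 0 →
      ∃ (B : h →L[ℂ] h) (hB : ∀ ζ : h, B ζ ∈ DΘ),
        (∀ ζ ∈ Set.range ⇑Pr, Θ ⟨B ζ, hB ζ⟩ + Pr (Γ z (Pr (B ζ))) = ζ) ∧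
        ∀ x : DΘ, B (Θ x + Pr (Γ z (Pr (x : h)))) = (x : h) :=
  krein_nonreal_subset_Z_general D A ρA hρconj R hmem hres1 hres2 hRadj τ C hτ G hG hτsurj h0 hsub Γ
    hΓ Pr hPrproj hPrsa DΘ hDΘ hDΘdense Θ hΘran hΘsym hΘsa hρ
end

section
/- For z ∈ Z_{Π,Θ}, the operator R_{z,Π,Θ} := R_z + G_z Π Γ_{z,Π,Θ}⁻¹ Π G_{z̄}* satisfies the first resolvent identity: R_{z,Π,Θ} − R_{w,Π,Θ} = (w − z) R_{w,Π,Θ} R_{z,Π,Θ} for z, w ∈ Z_{Π,Θ}. -/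
/- Abstract Krein framework (Posilicano): the self-adjoint operator A₀ on the
Hilbert space H is modeled by its domain `D`, its action `A`, its resolvent set
`ρA` and its resolvent family `R z = (-A₀+z)⁻¹`; `τ : 𝒟(A₀) → h` is bounded
w.r.t. the graph norm; `G z = (τ R_z̄)*` is characterized by the adjoint identity. -/

local notation "⟪" x ", " y "⟫" => @inner ℂ _ _ x y

/-- The Krein resolvent `R_{z,Pr,Θ} := R_z + G_z Pr Γ_{z,Pr,Θ}⁻¹ Pr G_{z̄}*`, where
`B z` denotes the (bounded) inverse `Γ_{z,Pr,Θ}⁻¹`. -/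
noncomputable def kreinResolvent {H h : Type*}
    [NormedAddCommGroup H] [InnerProductSpace ℂ H] [CompleteSpace H]
    [NormedAddCommGroup h] [InnerProductSpace ℂ h] [CompleteSpace h]
    (R : ℂ → H →L[ℂ] H) (G : ℂ → h →L[ℂ] H) (Pr : h →L[ℂ] h)
    (B : ℂ → h →L[ℂ] h) (z : ℂ) : H →L[ℂ] H :=
  R z + (G z).comp ((Pr.comp ((B z).comp (Pr.comp
    (ContinuousLinearMap.adjoint (G ((starRingEnd ℂ) z)))))))

/-- the family `R_{z,Pr,Θ}` satisfies the first resolvent identity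
on `Z_{Pr,Θ}`. -/
theorem krein_resolvent_identity
    {H h : Type*}
    [NormedAddCommGroup H] [InnerProductSpace ℂ H] [CompleteSpace H]
    [NormedAddCommGroup h] [InnerProductSpace ℂ h] [CompleteSpace h]
    (D : Submodule ℂ H) (hDdense : Dense (D : Set H))
    (A : D →ₗ[ℂ] H)
    (hsym : ∀ x y : D, ⟪A x, (y : H)⟫ = ⟪(x : H), A y⟫)
    (ρA : Set ℂ)
    (hρconj : ∀ z ∈ ρA, (starRingEnd ℂ) z ∈ ρA)
    (R : ℂ → H →L[ℂ] H)
    (hmem : ∀ z, z ∈ ρA → ∀ y : H, R z y ∈ D)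
    (hres1 : ∀ z (hz : z ∈ ρA) (y : H), z • R z y - A ⟨R z y, hmem z hz y⟩ = y)
    (hres2 : ∀ z ∈ ρA, ∀ x : D, R z (z • (x : H) - A x) = (x : H))
    (hRadj : ∀ z ∈ ρA, ContinuousLinearMap.adjoint (R z) = R ((starRingEnd ℂ) z))
    (τ : D →ₗ[ℂ] h) (C : ℝ)
    (hτ : ∀ x : D, ‖τ x‖ ≤ C * (‖(x : H)‖ + ‖A x‖))
    (G : ℂ → h →L[ℂ] H)
    (hG : ∀ z (hz : z ∈ ρA) (ζ : h) (y : H),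
      ⟪G z ζ, y⟫ = ⟪ζ, τ ⟨R ((starRingEnd ℂ) z) y, hmem _ (hρconj z hz) y⟩⟫)
    (hτsurj : Function.Surjective τ)
    (hker : Dense ((fun x : D => (x : H)) '' {x : D | τ x = 0}))
    (h0 : (0 : ℂ) ∈ ρA)
    (hsub : ∀ z (hz : z ∈ ρA) (ζ : h), G 0 ζ - G z ζ ∈ D)
    (Γ : ℂ → h →L[ℂ] h)
    (hΓ : ∀ z (hz : z ∈ ρA) (ζ : h), Γ z ζ = τ ⟨G 0 ζ - G z ζ, hsub z hz ζ⟩)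
    (Pr : h →L[ℂ] h) (hPrproj : Pr.comp Pr = Pr) (hPrsa : IsSelfAdjoint Pr)
    (DΘ : Submodule ℂ h) (hDΘ : (DΘ : Set h) ⊆ Set.range ⇑Pr)
    (hDΘdense : Set.range ⇑Pr ⊆ closure (DΘ : Set h))
    (Θ : DΘ →ₗ[ℂ] h)
    (hΘran : ∀ x : DΘ, Θ x ∈ Set.range ⇑Pr)
    (hΘsym : ∀ x y : DΘ, ⟪Θ x, (y : h)⟫ = ⟪(x : h), Θ y⟫)
    (hΘsa : ∀ ζ η : h, ζ ∈ Set.range ⇑Pr → η ∈ Set.range ⇑Pr →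
      (∀ x : DΘ, ⟪ζ, Θ x⟫ = ⟪η, (x : h)⟫) → ζ ∈ DΘ)
    (Z : Set ℂ) (hZρ : Z ⊆ ρA) (hZconj : ∀ z ∈ Z, (starRingEnd ℂ) z ∈ Z)
    (B : ℂ → h →L[ℂ] h)
    (hBmem : ∀ z (hz : z ∈ Z) (ζ : h), B z ζ ∈ DΘ)
    (hB1 : ∀ z (hz : z ∈ Z), ∀ ζ ∈ Set.range ⇑Pr,
      Θ ⟨B z ζ, hBmem z hz ζ⟩ + Pr (Γ z (Pr (B z ζ))) = ζ)
    (hB2 : ∀ z ∈ Z, ∀ x : DΘ, B z (Θ x + Pr (Γ z (Pr (x : h)))) = (x : h))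
    (hBPr : ∀ z ∈ Z, B z = Pr.comp ((B z).comp Pr))
    (z : ℂ) (hz : z ∈ Z) (w : ℂ) (hw : w ∈ Z) :
    kreinResolvent R G Pr B z - kreinResolvent R G Pr B w =
      (w - z) • ((kreinResolvent R G Pr B w).comp (kreinResolvent R G Pr B z)) := by
  have hzρ : z ∈ ρA := hZρ hz
  have hwρ : w ∈ ρA := hZρ hw
  -- congruence for τ / Θ with respect to values
  have hτval : ∀ (v₁ v₂ : H) (h₁ : v₁ ∈ D) (h₂ : v₂ ∈ D), v₁ = v₂ →
      τ ⟨v₁, h₁⟩ = τ ⟨v₂, h₂⟩ := by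
    rintro v₁ v₂ h₁ h₂ rfl; rfl
  have hΘval : ∀ (v₁ v₂ : h) (h₁ : v₁ ∈ DΘ) (h₂ : v₂ ∈ DΘ), v₁ = v₂ →
      Θ ⟨v₁, h₁⟩ = Θ ⟨v₂, h₂⟩ := by
    rintro v₁ v₂ h₁ h₂ rfl; rfl
  -- first resolvent identity for R
  have hres : ∀ a, a ∈ ρA → ∀ b, b ∈ ρA → ∀ y : H,
      R a y - R b y = (b - a) • R b (R a y) := by
    intro a ha b hb y
    have h1 : a • (R a y) - A ⟨R a y, hmem a ha y⟩ = y := hres1 a ha y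
    have h2 : R b (b • (R a y) - A ⟨R a y, hmem a ha y⟩) = R a y :=
      hres2 b hb ⟨R a y, hmem a ha y⟩
    have h3 : R b y = (a - b) • R b (R a y) + R a y := by
      conv_lhs => rw [← h1]
      have h4 : a • (R a y) - A ⟨R a y, hmem a ha y⟩
          = ((a - b) • (R a y) + (b • (R a y) - A ⟨R a y, hmem a ha y⟩)) := by
        rw [sub_smul]; abel
      rw [h4, map_add, map_smul, h2]
    rw [h3, sub_smul, sub_smul]
    abel
  -- adjoint of G (conj a) is τ ∘ R a
  have hGadj : ∀ a, ∀ ha : a ∈ ρA, ∀ y : H,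
      (ContinuousLinearMap.adjoint (G ((starRingEnd ℂ) a))) y
        = τ ⟨R a y, hmem a ha y⟩ := by
    intro a ha y
    have haρ : (starRingEnd ℂ) a ∈ ρA := hρconj a ha
    refine ext_inner_left ℂ (fun ζ => ?_)
    rw [ContinuousLinearMap.adjoint_inner_right, hG _ haρ ζ y]
    congr 1
    exact hτval _ _ _ _ (by rw [Complex.conj_conj])
  -- difference identity for G
  have hGdiff : ∀ a, ∀ ha : a ∈ ρA, ∀ b, ∀ hb : b ∈ ρA, ∀ ζ : h,
      G b ζ = G a ζ + (a - b) • R b (G a ζ) := by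
    intro a ha b hb ζ
    have hab : (starRingEnd ℂ) a ∈ ρA := hρconj a ha
    have hbb : (starRingEnd ℂ) b ∈ ρA := hρconj b hb
    refine ext_inner_right ℂ (fun y => ?_)
    rw [inner_add_left, inner_smul_left, hG b hb ζ y, hG a ha ζ y]
    have h5 : ⟪R b (G a ζ), y⟫
        = ⟪ζ, τ ⟨R ((starRingEnd ℂ) a) (R ((starRingEnd ℂ) b) y),
            hmem _ hab _⟩⟫ := by
      rw [← ContinuousLinearMap.adjoint_inner_right (R b), hRadj b hb]
      exact hG a ha ζ _
    rw [h5]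
    have hsum : (⟨R ((starRingEnd ℂ) b) y, hmem _ hbb y⟩ : D)
        = ⟨R ((starRingEnd ℂ) a) y, hmem _ hab y⟩
          + ((starRingEnd ℂ) a - (starRingEnd ℂ) b) •
            ⟨R ((starRingEnd ℂ) a) (R ((starRingEnd ℂ) b) y), hmem _ hab _⟩ := by
      apply Subtype.ext
      have h6 := hres ((starRingEnd ℂ) b) hbb ((starRingEnd ℂ) a) hab y
      simp only [Submodule.coe_add, SetLike.mk_smul_mk]
      exact sub_eq_iff_eq_add'.mp h6
    rw [hsum, map_add, map_smul, inner_add_right, inner_smul_right, map_sub]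
  -- difference identity for Γ
  have hΓdiff : ∀ ζ : h, Γ z ζ - Γ w ζ
      = (z - w) • (ContinuousLinearMap.adjoint (G ((starRingEnd ℂ) w))) (G z ζ) := by
    intro ζ
    rw [hΓ z hzρ ζ, hΓ w hwρ ζ, hGadj w hwρ (G z ζ)]
    have hsub' : (⟨G 0 ζ - G z ζ, hsub z hzρ ζ⟩ : D) - ⟨G 0 ζ - G w ζ, hsub w hwρ ζ⟩
        = (z - w) • ⟨R w (G z ζ), hmem w hwρ _⟩ := by
      apply Subtype.ext
      simp only [Submodule.coe_sub, SetLike.mk_smul_mk]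
      have h7 := hGdiff z hzρ w hwρ ζ
      rw [sub_sub_sub_cancel_left, h7]
      abel
    rw [← map_sub, hsub', map_smul]
  -- projection facts
  have hPr2 : ∀ μ : h, Pr (Pr μ) = Pr μ := fun μ =>
    ContinuousLinearMap.ext_iff.mp hPrproj μ
  have hBfix : ∀ a, a ∈ Z → ∀ μ : h, B a μ = Pr (B a (Pr μ)) := fun a ha μ =>
    ContinuousLinearMap.ext_iff.mp (hBPr a ha) μ
  have hBPr' : ∀ a, ∀ ha : a ∈ Z, ∀ μ : h, B a (Pr μ) = B a μ := by
    intro a ha μ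
    rw [hBfix a ha (Pr μ), hPr2, ← hBfix a ha μ]
  have hPrB : ∀ a, ∀ ha : a ∈ Z, ∀ μ : h, Pr (B a μ) = B a μ := by
    intro a ha μ
    conv_lhs => rw [hBfix a ha μ, hPr2]
    rw [← hBfix a ha μ]
  -- key identity relating B z and B w
  have hkey : ∀ ζ : h, B z ζ = B w ζ
      + B w (Γ w (B z ζ) - Γ z (B z ζ)) := by
    intro ζ
    have hmemζ : Pr ζ ∈ Set.range ⇑Pr := ⟨ζ, rfl⟩
    have hBzPr : B z (Pr ζ) = B z ζ := hBPr' z hz ζ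
    have h1 := hB1 z hz (Pr ζ) hmemζ
    have hΘeq : Θ ⟨B z (Pr ζ), hBmem z hz (Pr ζ)⟩ = Θ ⟨B z ζ, hBmem z hz ζ⟩ :=
      hΘval _ _ _ _ hBzPr
    rw [hΘeq, hBzPr] at h1
    have h2 := hB2 w hw ⟨B z ζ, hBmem z hz ζ⟩
    have hΘx : Θ ⟨B z ζ, hBmem z hz ζ⟩ = Pr ζ - Pr (Γ z (Pr (B z ζ))) := by
      rw [← h1]; abel
    rw [hΘx] at h2
    have harg : Pr ζ - Pr (Γ z (Pr (B z ζ))) + Pr (Γ w (Pr (B z ζ)))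
        = Pr ζ + Pr (Γ w (Pr (B z ζ)) - Γ z (Pr (B z ζ))) := by
      rw [map_sub]; abel
    rw [harg, map_add, hBPr' w hw ζ, hBPr' w hw, hPrB z hz ζ] at h2
    exact h2.symm
  -- final assembly
  ext y
  simp only [kreinResolvent, ContinuousLinearMap.sub_apply, ContinuousLinearMap.add_apply,
    ContinuousLinearMap.coe_comp', Function.comp_apply, ContinuousLinearMap.coe_smul',
    Pi.smul_apply]
  rw [← hBfix z hz, ← hBfix w hw, ← hBfix w hw]
  set ν := (ContinuousLinearMap.adjoint (G ((starRingEnd ℂ) z))) y with hν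
  set μ := (ContinuousLinearMap.adjoint (G ((starRingEnd ℂ) w))) y with hμ
  set ξ := B z ν with hξ
  have k1 : (w - z) • R w (R z y) = R z y - R w y := (hres z hzρ w hwρ y).symm
  have k2 : (w - z) • R w (G z ξ) = G z ξ - G w ξ := by
    rw [hGdiff z hzρ w hwρ ξ]; module
  have k3 : (w - z) • (ContinuousLinearMap.adjoint (G ((starRingEnd ℂ) w))) (R z y)
      = ν - μ := by
    rw [hν, hμ, hGadj w hwρ (R z y), hGadj z hzρ y, hGadj w hwρ y, ← map_sub,
      ← map_smul]
    refine congrArg τ (Subtype.ext ?_)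
    simp only [Submodule.coe_sub, SetLike.mk_smul_mk]
    exact k1
  have k4 : (w - z) • (ContinuousLinearMap.adjoint (G ((starRingEnd ℂ) w))) (G z ξ)
      = Γ w ξ - Γ z ξ := by
    rw [show (w - z) = -(z - w) by ring, neg_smul, ← hΓdiff ξ, neg_sub]
  have k5 : B w ((ν - μ) + (Γ w ξ - Γ z ξ)) = ξ - B w μ := by
    have h9 := hkey ν
    rw [← hξ] at h9
    rw [map_add, map_sub (B w) ν μ]
    conv_rhs => rw [h9]
    abel
  have k6 : (w - z) • G w (B w ((ContinuousLinearMap.adjoint (G ((starRingEnd ℂ) w))) (R z y)))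
      = G w (B w (ν - μ)) := by
    rw [← map_smul (G w), ← map_smul (B w), k3]
  have k7 : (w - z) • G w (B w ((ContinuousLinearMap.adjoint (G ((starRingEnd ℂ) w))) (G z ξ)))
      = G w (B w (Γ w ξ - Γ z ξ)) := by
    rw [← map_smul (G w), ← map_smul (B w), k4]
  rw [map_add (ContinuousLinearMap.adjoint (G ((starRingEnd ℂ) w))) (R z y) (G z ξ),
    map_add (B w), map_add (G w), map_add (R w) (R z y) (G z ξ)]
  rw [smul_add, smul_add, smul_add, k1, k2, k6, k7, ← map_add (G w), ← map_add (B w), k5,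
    map_sub (G w)]
  abel
end

section
/- The operator family R_{z,Π,Θ} := R_z + G_z Π Γ_{z,Π,Θ}⁻¹ Π G_{z̄}* is the resolvent of a self-adjoint extension A_{Π,Θ} of S, whose domain is {φ ∈ D(S*) : ζ_φ ∈ D(Θ), Π τ φ₀ = Θ ζ_φ} and on which A_{Π,Θ}φ = A₀φ₀. -/
/- Abstract Krein framework (Posilicano): the self-adjoint operator A₀ on the
Hilbert space H is modeled by its domain `D`, its action `A`, its resolvent set
`ρA` and its resolvent family `R z = (-A₀+z)⁻¹`; `τ : 𝒟(A₀) → h` is bounded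
w.r.t. the graph norm; `G z = (τ R_z̄)*` is characterized by the adjoint identity. -/

local notation "⟪" x ", " y "⟫" => @inner ℂ _ _ x y

/-- The graph of the extension `A_{Pr,Θ}`: `A_{Pr,Θ} φ = η` iff `φ = φ₀ + G₀ζ`
with `ζ ∈ 𝒟(Θ)`, `Pr τ φ₀ = Θ ζ` and `η = A₀ φ₀`. -/
def extGraph {H h : Type*}
    [NormedAddCommGroup H] [InnerProductSpace ℂ H]
    [NormedAddCommGroup h] [InnerProductSpace ℂ h]
    (D : Submodule ℂ H) (A : D →ₗ[ℂ] H) (τ : D →ₗ[ℂ] h) (G0 : h →L[ℂ] H)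
    (Pr : h →L[ℂ] h) (DΘ : Submodule ℂ h) (Θ : DΘ →ₗ[ℂ] h) (φ η : H) : Prop :=
  ∃ (φ₀ : D) (ζ : h) (hζ : ζ ∈ DΘ),
    φ = (φ₀ : H) + G0 ζ ∧ Pr (τ φ₀) = Θ ⟨ζ, hζ⟩ ∧ η = A φ₀

/-! `S*` acts by `φ₀ + G₀ζ ↦ A₀φ₀`, and Green's formula `⟪G₀ζ, A₀x⟫ = -⟪ζ, τx⟫` turns its
boundary form into `⟪S*φ, ψ⟫ - ⟪φ, S*ψ⟫ = ⟪ζ_φ, τψ₀⟫ - ⟪τφ₀, ζ_ψ⟫`. The boundary condition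
`Pr τφ₀ = Θζ` with `Θ` self-adjoint in `ran Pr` makes this form vanish on the graph of `A_{Pr,Θ}`;
conversely, testing a pair adjoint to that graph first against `ker τ` and then against boundary
values `(τψ₀, ζ_ψ) = (w, 0)` with `Pr w = 0` and `(Θx, x)` forces it into the graph. That such a
pair lies in `D(S*)` at all comes from `G₀* = τR₀` being surjective: `G₀` then has closed range,
so `ran G₀ = (ker τR₀)ᗮ`. The resolvent formula is checked directly, using
`G₀ - G_z = z R_z G₀ = z R₀ G_z`, a consequence of the resolvent identity. -/

open ContinuousLinearMap

section Hilbert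

variable {𝕜 E F : Type*} [RCLike 𝕜] [NormedAddCommGroup E] [InnerProductSpace 𝕜 E]
  [NormedAddCommGroup F] [InnerProductSpace 𝕜 F]

theorem ContinuousLinearMap.IsIdempotentElem.apply_eq_self_of_mem_range {P : E →L[𝕜] E}
    (hP : IsIdempotentElem P) {u : E} (hu : u ∈ Set.range P) : P u = u := by
  obtain ⟨v, rfl⟩ := hu
  exact congr($hP v)

theorem IsStarProjection.apply_eq_self_of_mem_orthogonal_ker [CompleteSpace E] {P : E →L[𝕜] E}
    (hP : IsStarProjection P) {u : E} (hu : u ∈ P.kerᗮ) : P u = u := by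
  rw [orthogonal_ker, hP.isSelfAdjoint.adjoint_eq,
    IsClosed.submodule_topologicalClosure_eq hP.isIdempotentElem.isClosed_range] at hu
  exact (LinearMap.IsIdempotentElem.mem_range_iff hP.isIdempotentElem.toLinearMap).mp hu

theorem ContinuousLinearMap.isClosed_range_adjoint_of_surjective [CompleteSpace E]
    [CompleteSpace F] (T : E →L[𝕜] F) (hT : Function.Surjective T) :
    IsClosed (Set.range (adjoint T)) := by
  obtain ⟨c, hc, hpre⟩ := T.exists_preimage_norm_le hT
  refine AntilipschitzWith.isClosed_range (K := c.toNNReal) ?_ (adjoint T).uniformContinuous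
  refine (adjoint T).antilipschitz_of_bound fun y => ?_
  obtain ⟨x, hxy, hx⟩ := hpre y
  rw [Real.coe_toNNReal c hc.le]
  have key : ‖y‖ * ‖y‖ ≤ c * ‖adjoint T y‖ * ‖y‖ := calc
    ‖y‖ * ‖y‖ = ‖(inner 𝕜 (adjoint T y) x : 𝕜)‖ := by
      rw [adjoint_inner_left, hxy, ← inner_self_re_eq_norm, inner_self_eq_norm_mul_norm]
    _ ≤ ‖adjoint T y‖ * ‖x‖ := norm_inner_le_norm _ _
    _ ≤ c * ‖adjoint T y‖ * ‖y‖ := by rw [mul_comm c, mul_assoc]; gcongr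
  rcases (norm_nonneg y).eq_or_lt with hy | hy
  · rw [← hy]; positivity
  · exact le_of_mul_le_mul_right key hy

theorem ContinuousLinearMap.orthogonal_ker_eq_range_adjoint_of_surjective [CompleteSpace E]
    [CompleteSpace F] (T : E →L[𝕜] F) (hT : Function.Surjective T) :
    T.kerᗮ = (adjoint T).range := by
  rw [orthogonal_ker]
  exact IsClosed.submodule_topologicalClosure_eq (T.isClosed_range_adjoint_of_surjective hT)

end Hilbert

namespace Krein

variable {H h : Type*} [NormedAddCommGroup H] [InnerProductSpace ℂ H]
  [NormedAddCommGroup h] [InnerProductSpace ℂ h]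
  {D : Submodule ℂ H} {A : D →ₗ[ℂ] H} {ρA : Set ℂ} {R : ℂ → H →L[ℂ] H} {τ : D →ₗ[ℂ] h}
  {G : ℂ → h →L[ℂ] H} {Pr : h →L[ℂ] h} {DΘ : Submodule ℂ h} {Θ : DΘ →ₗ[ℂ] h}

theorem inner_eq_inner_of_proj_eq_apply [CompleteSpace h] (hPr : IsStarProjection Pr)
    (hDΘ : (DΘ : Set h) ⊆ Set.range Pr)
    (hΘsym : ∀ x y : DΘ, ⟪Θ x, (y : h)⟫ = ⟪(x : h), Θ y⟫)
    {ζ κ a b : h} (hζ : ζ ∈ DΘ) (hκ : κ ∈ DΘ)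
    (ha : Pr a = Θ ⟨ζ, hζ⟩) (hb : Pr b = Θ ⟨κ, hκ⟩) : ⟪ζ, b⟫ = ⟪a, κ⟫ := calc
  ⟪ζ, b⟫ = ⟪Pr ζ, b⟫ := by rw [hPr.isIdempotentElem.apply_eq_self_of_mem_range (hDΘ hζ)]
  _ = ⟪ζ, Θ ⟨κ, hκ⟩⟫ := by rw [← hb, ← adjoint_inner_right, hPr.isSelfAdjoint.adjoint_eq]
  _ = ⟪Θ ⟨ζ, hζ⟩, κ⟫ := (hΘsym ⟨ζ, hζ⟩ ⟨κ, hκ⟩).symm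
  _ = ⟪a, Pr κ⟫ := by rw [← ha, ← adjoint_inner_right, hPr.isSelfAdjoint.adjoint_eq]
  _ = ⟪a, κ⟫ := by rw [hPr.isIdempotentElem.apply_eq_self_of_mem_range (hDΘ hκ)]

theorem exists_mem_apply_eq_of_forall_inner (hDΘdense : Set.range Pr ⊆ closure (DΘ : Set h))
    (hΘran : ∀ x : DΘ, Θ x ∈ Set.range Pr)
    (hΘsym : ∀ x y : DΘ, ⟪Θ x, (y : h)⟫ = ⟪(x : h), Θ y⟫)
    (hΘsa : ∀ ζ η : h, ζ ∈ Set.range Pr → η ∈ Set.range Pr →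
      (∀ x : DΘ, ⟪ζ, Θ x⟫ = ⟪η, (x : h)⟫) → ζ ∈ DΘ)
    {ζ w : h} (hζ : ζ ∈ Set.range Pr) (hw : w ∈ Set.range Pr)
    (hζw : ∀ x : DΘ, ⟪ζ, Θ x⟫ = ⟪w, (x : h)⟫) : ∃ hζΘ : ζ ∈ DΘ, Θ ⟨ζ, hζΘ⟩ = w := by
  have hζΘ := hΘsa ζ w hζ hw hζw
  refine ⟨hζΘ, ?_⟩
  set d := Θ ⟨ζ, hζΘ⟩ - w
  have hd_range : d ∈ Set.range Pr := by
    obtain ⟨a, ha⟩ := hΘran ⟨ζ, hζΘ⟩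
    obtain ⟨b, rfl⟩ := hw
    exact ⟨a - b, by rw [map_sub, ha]⟩
  have hd_closure : d ∈ DΘ.topologicalClosure := by
    rw [← SetLike.mem_coe, Submodule.topologicalClosure_coe]
    exact hDΘdense hd_range
  have hd_orth : d ∈ DΘ.topologicalClosureᗮ := by
    rw [Submodule.orthogonal_closure, Submodule.mem_orthogonal']
    intro x hx
    rw [inner_sub_left, hΘsym ⟨ζ, hζΘ⟩ ⟨x, hx⟩, hζw ⟨x, hx⟩, sub_self]
  rw [← sub_eq_zero]
  exact inner_self_eq_zero.mp (Submodule.inner_right_of_mem_orthogonal hd_closure hd_orth)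

theorem A_resolvent (hmem : ∀ z, z ∈ ρA → ∀ y : H, R z y ∈ D)
    (hres1 : ∀ z (hz : z ∈ ρA) (y : H), z • R z y - A ⟨R z y, hmem z hz y⟩ = y)
    {z : ℂ} (hz : z ∈ ρA) (y : H) : A ⟨R z y, hmem z hz y⟩ = z • R z y - y := by
  rw [← sub_sub_cancel (z • R z y) (A ⟨R z y, hmem z hz y⟩), hres1 z hz y]

theorem resolvent_zero_A (hres2 : ∀ z ∈ ρA, ∀ x : D, R z (z • (x : H) - A x) = (x : H))
    (h0 : (0 : ℂ) ∈ ρA) (x : D) : R 0 (A x) = -(x : H) := by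
  simpa using congr(-$(hres2 0 h0 x))

theorem resolvent_sub_resolvent (hmem : ∀ z, z ∈ ρA → ∀ y : H, R z y ∈ D)
    (hres1 : ∀ z (hz : z ∈ ρA) (y : H), z • R z y - A ⟨R z y, hmem z hz y⟩ = y)
    (hres2 : ∀ z ∈ ρA, ∀ x : D, R z (z • (x : H) - A x) = (x : H))
    {a b : ℂ} (ha : a ∈ ρA) (hb : b ∈ ρA) (y : H) :
    R a y - R b y = (b - a) • R a (R b y) := by
  have h := hres2 a ha ⟨R b y, hmem b hb y⟩
  rw [A_resolvent hmem hres1 hb,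
    show a • R b y - (b • R b y - y) = y - (b - a) • R b y by module, map_sub, map_smul] at h
  calc R a y - R b y = R a y - (R a y - (b - a) • R a (R b y)) := by rw [h]
    _ = (b - a) • R a (R b y) := sub_sub_cancel _ _

theorem extGraph_of_tau_eq_zero {G0 : h →L[ℂ] H} {x : D} (hx : τ x = 0) :
    extGraph D A τ G0 Pr DΘ Θ x (A x) :=
  ⟨x, 0, DΘ.zero_mem, by rw [map_zero, add_zero],
    by rw [hx, map_zero]; exact (map_zero Θ).symm, rfl⟩

theorem kreinResolvent_apply [CompleteSpace H] [CompleteSpace h] (hPr : IsIdempotentElem Pr)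
    (hDΘ : (DΘ : Set h) ⊆ Set.range Pr) {B : ℂ → h →L[ℂ] h} {z : ℂ}
    (hBmem : ∀ ζ, B z ζ ∈ DΘ) (y : H) :
    kreinResolvent R G Pr B z y
      = R z y + G z (B z (Pr (adjoint (G ((starRingEnd ℂ) z)) y))) := by
  simp only [kreinResolvent, add_apply, comp_apply]
  rw [hPr.apply_eq_self_of_mem_range (hDΘ (hBmem _))]

section Green

variable (hρconj : ∀ z ∈ ρA, (starRingEnd ℂ) z ∈ ρA)
  (hmem : ∀ z, z ∈ ρA → ∀ y : H, R z y ∈ D)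
  (hG : ∀ z (hz : z ∈ ρA) (ζ : h) (y : H),
    ⟪G z ζ, y⟫ = ⟪ζ, τ ⟨R ((starRingEnd ℂ) z) y, hmem _ (hρconj z hz) y⟩⟫)
include hG

theorem inner_G_of_coe_eq {z : ℂ} (hz : z ∈ ρA) (ζ : h) (y : H) {x : D}
    (hx : (x : H) = R ((starRingEnd ℂ) z) y) : ⟪G z ζ, y⟫ = ⟪ζ, τ x⟫ := by
  rw [hG z hz ζ y, show (⟨R ((starRingEnd ℂ) z) y, _⟩ : D) = x from Subtype.ext hx.symm]

theorem adjoint_G_conj_apply [CompleteSpace H] [CompleteSpace h] {z : ℂ} (hz : z ∈ ρA)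
    (y : H) : adjoint (G ((starRingEnd ℂ) z)) y = τ ⟨R z y, hmem z hz y⟩ :=
  ext_inner_left ℂ fun ζ => by
    rw [adjoint_inner_right]
    exact inner_G_of_coe_eq hρconj hmem hG (hρconj z hz) ζ y (by rw [Complex.conj_conj])

theorem inner_G_zero_A (hres2 : ∀ z ∈ ρA, ∀ x : D, R z (z • (x : H) - A x) = (x : H))
    (h0 : (0 : ℂ) ∈ ρA) (ζ : h) (x : D) : ⟪G 0 ζ, A x⟫ = -⟪ζ, τ x⟫ := by
  rw [inner_G_of_coe_eq hρconj hmem hG h0 ζ (A x) (x := -x)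
    (by rw [map_zero, resolvent_zero_A hres2 h0, Submodule.coe_neg]), map_neg, inner_neg_right]

theorem green_formula (hsym : ∀ x y : D, ⟪A x, (y : H)⟫ = ⟪(x : H), A y⟫)
    (hres2 : ∀ z ∈ ρA, ∀ x : D, R z (z • (x : H) - A x) = (x : H))
    (h0 : (0 : ℂ) ∈ ρA) (φ₀ ψ₀ : D) (ζ κ : h) :
    ⟪A φ₀, ψ₀ + G 0 κ⟫ - ⟪φ₀ + G 0 ζ, A ψ₀⟫ = ⟪ζ, τ ψ₀⟫ - ⟪τ φ₀, κ⟫ := by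
  have hκ : ⟪A φ₀, G 0 κ⟫ = -⟪τ φ₀, κ⟫ := by
    rw [← inner_conj_symm, inner_G_zero_A hρconj hmem hG hres2 h0, map_neg, inner_conj_symm]
  rw [inner_add_right, inner_add_left, hsym, hκ, inner_G_zero_A hρconj hmem hG hres2 h0]
  ring

theorem G_sub_G [CompleteSpace H]
    (hres1 : ∀ z (hz : z ∈ ρA) (y : H), z • R z y - A ⟨R z y, hmem z hz y⟩ = y)
    (hres2 : ∀ z ∈ ρA, ∀ x : D, R z (z • (x : H) - A x) = (x : H))
    (hRadj : ∀ z ∈ ρA, adjoint (R z) = R ((starRingEnd ℂ) z))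
    {a b : ℂ} (ha : a ∈ ρA) (hb : b ∈ ρA) (ζ : h) :
    G a ζ - G b ζ = (b - a) • R b (G a ζ) := by
  set c := starRingEnd ℂ
  refine ext_inner_right ℂ fun y => ?_
  have hdiff : (⟨R (c a) y, hmem _ (hρconj a ha) y⟩ : D) - ⟨R (c b) y, hmem _ (hρconj b hb) y⟩
      = (c b - c a) • ⟨R (c a) (R (c b) y), hmem _ (hρconj a ha) _⟩ :=
    Subtype.ext (resolvent_sub_resolvent hmem hres1 hres2 (hρconj a ha) (hρconj b hb) y)
  calc ⟪G a ζ - G b ζ, y⟫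
      = ⟪ζ, τ ((⟨R (c a) y, _⟩ : D) - ⟨R (c b) y, _⟩)⟫ := by
        rw [inner_sub_left, hG a ha, hG b hb, map_sub, inner_sub_right]
    _ = (c b - c a) * ⟪G a ζ, R (c b) y⟫ := by
        rw [hdiff, map_smul, inner_smul_right, ← hG a ha]
    _ = ⟪(b - a) • R b (G a ζ), y⟫ := by
        rw [← hRadj b hb, adjoint_inner_right, inner_smul_left, map_sub]

theorem A_of_coe_eq_G_zero_sub_G [CompleteSpace H]
    (hres1 : ∀ z (hz : z ∈ ρA) (y : H), z • R z y - A ⟨R z y, hmem z hz y⟩ = y)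
    (hres2 : ∀ z ∈ ρA, ∀ x : D, R z (z • (x : H) - A x) = (x : H))
    (hRadj : ∀ z ∈ ρA, adjoint (R z) = R ((starRingEnd ℂ) z)) (h0 : (0 : ℂ) ∈ ρA)
    {z : ℂ} (hz : z ∈ ρA) (ζ : h) {x : D} (hx : (x : H) = G 0 ζ - G z ζ) :
    A x = -(z • G z ζ) := by
  have hR : (x : H) = R 0 (z • G z ζ) := by
    rw [hx, ← neg_sub, G_sub_G hρconj hmem hG hres1 hres2 hRadj hz h0, map_smul, zero_sub,
      neg_smul, neg_neg]
  rw [show x = ⟨R 0 (z • G z ζ), hmem 0 h0 _⟩ from Subtype.ext hR, A_resolvent hmem hres1 h0,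
    zero_smul, zero_sub]

theorem resolvent_smul_G_zero [CompleteSpace H]
    (hres1 : ∀ z (hz : z ∈ ρA) (y : H), z • R z y - A ⟨R z y, hmem z hz y⟩ = y)
    (hres2 : ∀ z ∈ ρA, ∀ x : D, R z (z • (x : H) - A x) = (x : H))
    (hRadj : ∀ z ∈ ρA, adjoint (R z) = R ((starRingEnd ℂ) z)) (h0 : (0 : ℂ) ∈ ρA)
    {z : ℂ} (hz : z ∈ ρA) (ζ : h) : R z (z • G 0 ζ) = G 0 ζ - G z ζ := by
  rw [G_sub_G hρconj hmem hG hres1 hres2 hRadj h0 hz, sub_zero, map_smul]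

theorem exists_eq_add_G_zero_of_forall_inner [CompleteSpace H] [CompleteSpace h]
    (hsym : ∀ x y : D, ⟪A x, (y : H)⟫ = ⟪(x : H), A y⟫)
    (hres1 : ∀ z (hz : z ∈ ρA) (y : H), z • R z y - A ⟨R z y, hmem z hz y⟩ = y)
    (hres2 : ∀ z ∈ ρA, ∀ x : D, R z (z • (x : H) - A x) = (x : H))
    (h0 : (0 : ℂ) ∈ ρA) (hτsurj : Function.Surjective τ) {φ η : H}
    (hφη : ∀ x : D, τ x = 0 → ⟪η, (x : H)⟫ = ⟪φ, A x⟫) :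
    ∃ (φ₀ : D) (ζ : h), φ = φ₀ + G 0 ζ ∧ A φ₀ = η := by
  set φ₀ : D := -⟨R 0 η, hmem 0 h0 η⟩
  have hAφ₀ : A φ₀ = η := by
    rw [map_neg, A_resolvent hmem hres1 h0, zero_smul, zero_sub, neg_neg]
  have hT : ∀ v, adjoint (G 0) v = τ ⟨R 0 v, hmem 0 h0 v⟩ := fun v => by
    simpa only [map_zero] using adjoint_G_conj_apply hρconj hmem hG h0 v
  have hTsurj : Function.Surjective (adjoint (G 0)) := fun w => by
    obtain ⟨x, rfl⟩ := hτsurj w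
    refine ⟨-A x, ?_⟩
    rw [hT, show (⟨R 0 (-A x), hmem 0 h0 _⟩ : D) = x from
      Subtype.ext (by rw [Submodule.coe_mk, map_neg, resolvent_zero_A hres2 h0, neg_neg])]
  have horth : φ - φ₀ ∈ (adjoint (G 0)).kerᗮ := by
    refine (Submodule.mem_orthogonal' _ _).mpr fun v hv => ?_
    have hx := hφη ⟨R 0 v, hmem 0 h0 v⟩ (by rw [← hT]; exact hv)
    rw [← hAφ₀, hsym, A_resolvent hmem hres1 h0, zero_smul, zero_sub, inner_neg_right,
      inner_neg_right, neg_inj] at hx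
    rw [inner_sub_left, hx, sub_self]
  rw [orthogonal_ker_eq_range_adjoint_of_surjective _ hTsurj, adjoint_adjoint] at horth
  obtain ⟨ζ, hζ⟩ := horth
  exact ⟨φ₀, ζ, by rw [coe_coe] at hζ; rw [hζ, add_sub_cancel], hAφ₀⟩

theorem inner_eq_of_extGraph [CompleteSpace h]
    (hsym : ∀ x y : D, ⟪A x, (y : H)⟫ = ⟪(x : H), A y⟫)
    (hres2 : ∀ z ∈ ρA, ∀ x : D, R z (z • (x : H) - A x) = (x : H)) (h0 : (0 : ℂ) ∈ ρA)
    (hPr : IsStarProjection Pr) (hDΘ : (DΘ : Set h) ⊆ Set.range Pr)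
    (hΘsym : ∀ x y : DΘ, ⟪Θ x, (y : h)⟫ = ⟪(x : h), Θ y⟫) {φ η φ' η' : H}
    (hφ : extGraph D A τ (G 0) Pr DΘ Θ φ η) (hφ' : extGraph D A τ (G 0) Pr DΘ Θ φ' η') :
    ⟪η, φ'⟫ = ⟪φ, η'⟫ := by
  obtain ⟨φ₀, ζ, hζ, rfl, hbc, rfl⟩ := hφ
  obtain ⟨φ₀', ζ', hζ', rfl, hbc', rfl⟩ := hφ'
  rw [← sub_eq_zero, green_formula hρconj hmem hG hsym hres2 h0,
    inner_eq_inner_of_proj_eq_apply hPr hDΘ hΘsym hζ hζ' hbc hbc', sub_self]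

theorem extGraph_of_forall_inner [CompleteSpace H] [CompleteSpace h]
    (hsym : ∀ x y : D, ⟪A x, (y : H)⟫ = ⟪(x : H), A y⟫)
    (hres1 : ∀ z (hz : z ∈ ρA) (y : H), z • R z y - A ⟨R z y, hmem z hz y⟩ = y)
    (hres2 : ∀ z ∈ ρA, ∀ x : D, R z (z • (x : H) - A x) = (x : H))
    (h0 : (0 : ℂ) ∈ ρA) (hτsurj : Function.Surjective τ)
    (hPr : IsStarProjection Pr) (hDΘ : (DΘ : Set h) ⊆ Set.range Pr)
    (hDΘdense : Set.range Pr ⊆ closure (DΘ : Set h)) (hΘran : ∀ x : DΘ, Θ x ∈ Set.range Pr)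
    (hΘsym : ∀ x y : DΘ, ⟪Θ x, (y : h)⟫ = ⟪(x : h), Θ y⟫)
    (hΘsa : ∀ ζ η : h, ζ ∈ Set.range Pr → η ∈ Set.range Pr →
      (∀ x : DΘ, ⟪ζ, Θ x⟫ = ⟪η, (x : h)⟫) → ζ ∈ DΘ) {φ η : H}
    (hadj : ∀ ψ ξ : H, extGraph D A τ (G 0) Pr DΘ Θ ψ ξ → ⟪η, ψ⟫ = ⟪φ, ξ⟫) :
    extGraph D A τ (G 0) Pr DΘ Θ φ η := by
  obtain ⟨φ₀, ζ, rfl, rfl⟩ := exists_eq_add_G_zero_of_forall_inner hρconj hmem hG hsym hres1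
    hres2 h0 hτsurj fun x hx => hadj x (A x) (extGraph_of_tau_eq_zero hx)
  have hboundary : ∀ (ψ₀ : D) (κ : h) (hκ : κ ∈ DΘ), Pr (τ ψ₀) = Θ ⟨κ, hκ⟩ →
      ⟪ζ, τ ψ₀⟫ = ⟪τ φ₀, κ⟫ := fun ψ₀ κ hκ hbc => by
    rw [← sub_eq_zero, ← green_formula hρconj hmem hG hsym hres2 h0,
      hadj _ _ ⟨ψ₀, κ, hκ, rfl, hbc, rfl⟩, sub_self]
  have hζ : ζ ∈ Set.range Pr := ⟨ζ, hPr.apply_eq_self_of_mem_orthogonal_ker <|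
    (Submodule.mem_orthogonal _ _).mpr fun w hw => by
      obtain ⟨ψ₀, rfl⟩ := hτsurj w
      rw [← inner_conj_symm, hboundary ψ₀ 0 DΘ.zero_mem
        (by rw [show Pr (τ ψ₀) = 0 from hw]; exact (map_zero Θ).symm),
        inner_zero_right, map_zero]⟩
  have hζΘ : ∀ x : DΘ, ⟪ζ, Θ x⟫ = ⟪Pr (τ φ₀), (x : h)⟫ := fun x => by
    obtain ⟨ψ₀, hψ₀⟩ := hτsurj (Θ x)
    rw [← hψ₀, hboundary ψ₀ x x.2
        (by rw [hψ₀, hPr.isIdempotentElem.apply_eq_self_of_mem_range (hΘran x)]),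
      ← adjoint_inner_right, hPr.isSelfAdjoint.adjoint_eq,
      hPr.isIdempotentElem.apply_eq_self_of_mem_range (hDΘ x.2)]
  obtain ⟨hζDΘ, hbc⟩ :=
    exists_mem_apply_eq_of_forall_inner hDΘdense hΘran hΘsym hΘsa hζ ⟨_, rfl⟩ hζΘ
  exact ⟨φ₀, ζ, hζDΘ, rfl, hbc.symm, rfl⟩

section Resolvent

variable [CompleteSpace H] [CompleteSpace h]
  (hres1 : ∀ z (hz : z ∈ ρA) (y : H), z • R z y - A ⟨R z y, hmem z hz y⟩ = y)
  (hres2 : ∀ z ∈ ρA, ∀ x : D, R z (z • (x : H) - A x) = (x : H))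
  (hRadj : ∀ z ∈ ρA, adjoint (R z) = R ((starRingEnd ℂ) z)) (h0 : (0 : ℂ) ∈ ρA)
  (hPr : IsIdempotentElem Pr) (hDΘ : (DΘ : Set h) ⊆ Set.range Pr)
  {Γ B : ℂ → h →L[ℂ] h} {z : ℂ} (hz : z ∈ ρA) (hsub : ∀ ζ, G 0 ζ - G z ζ ∈ D)
  (hΓ : ∀ ζ, Γ z ζ = τ ⟨G 0 ζ - G z ζ, hsub ζ⟩) (hBmem : ∀ ζ, B z ζ ∈ DΘ)
include hres1 hres2 hRadj h0 hPr hDΘ hz hΓ hBmem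

theorem exists_extGraph_kreinResolvent
    (hB1 : ∀ ζ ∈ Set.range Pr, Θ ⟨B z ζ, hBmem ζ⟩ + Pr (Γ z (Pr (B z ζ))) = ζ) (y : H) :
    ∃ η, extGraph D A τ (G 0) Pr DΘ Θ (kreinResolvent R G Pr B z y) η ∧
      z • kreinResolvent R G Pr B z y - η = y := by
  have hK := kreinResolvent_apply (R := R) (G := G) hPr hDΘ hBmem y
  set ξ := adjoint (G ((starRingEnd ℂ) z)) y
  set ζ := B z (Pr ξ)
  have hζPr : Pr ζ = ζ := hPr.apply_eq_self_of_mem_range (hDΘ (hBmem _))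
  set φ₀ : D := ⟨R z y, hmem z hz y⟩ - ⟨G 0 ζ - G z ζ, hsub ζ⟩
  have hbc : Pr (τ φ₀) = Θ ⟨ζ, hBmem _⟩ := by
    have h1 := hB1 (Pr ξ) ⟨ξ, rfl⟩
    rw [hζPr] at h1
    rw [map_sub, map_sub, ← hΓ, ← adjoint_G_conj_apply hρconj hmem hG hz y]
    exact (eq_sub_of_add_eq h1).symm
  refine ⟨A φ₀, ⟨φ₀, ζ, hBmem _, ?_, hbc, rfl⟩, ?_⟩
  · rw [hK, Submodule.coe_sub, Submodule.coe_mk, Submodule.coe_mk]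
    abel
  · rw [hK, map_sub, A_resolvent hmem hres1 hz,
      A_of_coe_eq_G_zero_sub_G hρconj hmem hG hres1 hres2 hRadj h0 hz ζ rfl]
    module

theorem kreinResolvent_apply_smul_sub
    (hB2 : ∀ x : DΘ, B z (Θ x + Pr (Γ z (Pr (x : h)))) = (x : h)) {φ η : H}
    (hφ : extGraph D A τ (G 0) Pr DΘ Θ φ η) : kreinResolvent R G Pr B z (z • φ - η) = φ := by
  obtain ⟨φ₀, ζ, hζ, rfl, hbc, rfl⟩ := hφ
  have hζPr : Pr ζ = ζ := hPr.apply_eq_self_of_mem_range (hDΘ hζ)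
  have hRy : R z (z • ((φ₀ : H) + G 0 ζ) - A φ₀) = φ₀ + (G 0 ζ - G z ζ) := by
    rw [show z • ((φ₀ : H) + G 0 ζ) - A φ₀ = (z • (φ₀ : H) - A φ₀) + z • G 0 ζ by module,
      map_add, hres2 z hz, resolvent_smul_G_zero hρconj hmem hG hres1 hres2 hRadj h0 hz]
  have hB : B z (Pr (adjoint (G ((starRingEnd ℂ) z)) (z • ((φ₀ : H) + G 0 ζ) - A φ₀))) = ζ := by
    have h2 := hB2 ⟨ζ, hζ⟩
    change B z (Θ ⟨ζ, hζ⟩ + Pr (Γ z (Pr ζ))) = ζ at h2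
    rw [hζPr] at h2
    rw [adjoint_G_conj_apply hρconj hmem hG hz, show (⟨R z _, hmem z hz _⟩ : D)
      = φ₀ + ⟨G 0 ζ - G z ζ, hsub ζ⟩ from Subtype.ext hRy, map_add, ← hΓ, map_add, hbc]
    exact h2
  rw [kreinResolvent_apply hPr hDΘ hBmem, hB, hRy]
  abel

end Resolvent

end Green

end Krein

theorem krein_selfadjoint_extension_general
    {H h : Type*}
    [NormedAddCommGroup H] [InnerProductSpace ℂ H] [CompleteSpace H]
    [NormedAddCommGroup h] [InnerProductSpace ℂ h] [CompleteSpace h]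
    (D : Submodule ℂ H)
    (A : D →ₗ[ℂ] H)
    (hsym : ∀ x y : D, ⟪A x, (y : H)⟫ = ⟪(x : H), A y⟫)
    (ρA : Set ℂ)
    (hρconj : ∀ z ∈ ρA, (starRingEnd ℂ) z ∈ ρA)
    (R : ℂ → H →L[ℂ] H)
    (hmem : ∀ z, z ∈ ρA → ∀ y : H, R z y ∈ D)
    (hres1 : ∀ z (hz : z ∈ ρA) (y : H), z • R z y - A ⟨R z y, hmem z hz y⟩ = y)
    (hres2 : ∀ z ∈ ρA, ∀ x : D, R z (z • (x : H) - A x) = (x : H))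
    (hRadj : ∀ z ∈ ρA, ContinuousLinearMap.adjoint (R z) = R ((starRingEnd ℂ) z))
    (τ : D →ₗ[ℂ] h)
    (G : ℂ → h →L[ℂ] H)
    (hG : ∀ z (hz : z ∈ ρA) (ζ : h) (y : H),
      ⟪G z ζ, y⟫ = ⟪ζ, τ ⟨R ((starRingEnd ℂ) z) y, hmem _ (hρconj z hz) y⟩⟫)
    (hτsurj : Function.Surjective τ)
    (h0 : (0 : ℂ) ∈ ρA)
    (hsub : ∀ z (hz : z ∈ ρA) (ζ : h), G 0 ζ - G z ζ ∈ D)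
    (Γ : ℂ → h →L[ℂ] h)
    (hΓ : ∀ z (hz : z ∈ ρA) (ζ : h), Γ z ζ = τ ⟨G 0 ζ - G z ζ, hsub z hz ζ⟩)
    (Pr : h →L[ℂ] h) (hPrproj : Pr.comp Pr = Pr) (hPrsa : IsSelfAdjoint Pr)
    (DΘ : Submodule ℂ h) (hDΘ : (DΘ : Set h) ⊆ Set.range ⇑Pr)
    (hDΘdense : Set.range ⇑Pr ⊆ closure (DΘ : Set h))
    (Θ : DΘ →ₗ[ℂ] h)
    (hΘran : ∀ x : DΘ, Θ x ∈ Set.range ⇑Pr)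
    (hΘsym : ∀ x y : DΘ, ⟪Θ x, (y : h)⟫ = ⟪(x : h), Θ y⟫)
    (hΘsa : ∀ ζ η : h, ζ ∈ Set.range ⇑Pr → η ∈ Set.range ⇑Pr →
      (∀ x : DΘ, ⟪ζ, Θ x⟫ = ⟪η, (x : h)⟫) → ζ ∈ DΘ)
    (Z : Set ℂ) (hZρ : Z ⊆ ρA)
    (B : ℂ → h →L[ℂ] h)
    (hBmem : ∀ z (hz : z ∈ Z) (ζ : h), B z ζ ∈ DΘ)
    (hB1 : ∀ z (hz : z ∈ Z), ∀ ζ ∈ Set.range ⇑Pr,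
      Θ ⟨B z ζ, hBmem z hz ζ⟩ + Pr (Γ z (Pr (B z ζ))) = ζ)
    (hB2 : ∀ z ∈ Z, ∀ x : DΘ, B z (Θ x + Pr (Γ z (Pr (x : h)))) = (x : h))
 :
    (∀ x : D, τ x = 0 → extGraph D A τ (G 0) Pr DΘ Θ (x : H) (A x)) ∧
    (∀ φ η φ' η' : H, extGraph D A τ (G 0) Pr DΘ Θ φ η →
      extGraph D A τ (G 0) Pr DΘ Θ φ' η' → ⟪η, φ'⟫ = ⟪φ, η'⟫) ∧
    (∀ φ η : H,
      (∀ ψ ξ : H, extGraph D A τ (G 0) Pr DΘ Θ ψ ξ → ⟪η, ψ⟫ = ⟪φ, ξ⟫) →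
      extGraph D A τ (G 0) Pr DΘ Θ φ η) ∧
    (∀ z (hz : z ∈ Z) (y : H), ∃ η : H,
      extGraph D A τ (G 0) Pr DΘ Θ (kreinResolvent R G Pr B z y) η ∧
        z • kreinResolvent R G Pr B z y - η = y) ∧
    (∀ z ∈ Z, ∀ φ η : H, extGraph D A τ (G 0) Pr DΘ Θ φ η →
      kreinResolvent R G Pr B z (z • φ - η) = φ) := by
  have hPr : IsStarProjection Pr := ⟨hPrproj, hPrsa⟩
  exact ⟨fun _ => Krein.extGraph_of_tau_eq_zero,
    fun _ _ _ _ => Krein.inner_eq_of_extGraph hρconj hmem hG hsym hres2 h0 hPr hDΘ hΘsym,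
    fun _ _ => Krein.extGraph_of_forall_inner hρconj hmem hG hsym hres1 hres2 h0 hτsurj hPr hDΘ
      hDΘdense hΘran hΘsym hΘsa,
    fun z hz => Krein.exists_extGraph_kreinResolvent hρconj hmem hG hres1 hres2 hRadj h0
      hPr.isIdempotentElem hDΘ (hZρ hz) _ (hΓ z (hZρ hz)) (hBmem z hz) (hB1 z hz),
    fun z hz _ _ => Krein.kreinResolvent_apply_smul_sub hρconj hmem hG hres1 hres2 hRadj h0
      hPr.isIdempotentElem hDΘ (hZρ hz) _ (hΓ z (hZρ hz)) (hBmem z hz) (hB2 z hz)⟩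

/-- `R_{z,Pr,Θ}` is the resolvent of the self-adjoint extension
`A_{Pr,Θ}` of `S` with domain `{φ ∈ 𝒟(S*) : ζ_φ ∈ 𝒟(Θ), Pr τ φ₀ = Θ ζ_φ}` and
action `A_{Pr,Θ} φ = A₀ φ₀`: it extends `S`, it is symmetric, its graph is
self-adjoint, and `R_{z,Pr,Θ}` inverts `-A_{Pr,Θ} + z` for `z ∈ Z_{Pr,Θ}`. -/
theorem krein_selfadjoint_extension
    {H h : Type*}
    [NormedAddCommGroup H] [InnerProductSpace ℂ H] [CompleteSpace H]
    [NormedAddCommGroup h] [InnerProductSpace ℂ h] [CompleteSpace h]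
    (D : Submodule ℂ H) (hDdense : Dense (D : Set H))
    (A : D →ₗ[ℂ] H)
    (hsym : ∀ x y : D, ⟪A x, (y : H)⟫ = ⟪(x : H), A y⟫)
    (ρA : Set ℂ)
    (hρconj : ∀ z ∈ ρA, (starRingEnd ℂ) z ∈ ρA)
    (R : ℂ → H →L[ℂ] H)
    (hmem : ∀ z, z ∈ ρA → ∀ y : H, R z y ∈ D)
    (hres1 : ∀ z (hz : z ∈ ρA) (y : H), z • R z y - A ⟨R z y, hmem z hz y⟩ = y)
    (hres2 : ∀ z ∈ ρA, ∀ x : D, R z (z • (x : H) - A x) = (x : H))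
    (hRadj : ∀ z ∈ ρA, ContinuousLinearMap.adjoint (R z) = R ((starRingEnd ℂ) z))
    (τ : D →ₗ[ℂ] h) (C : ℝ)
    (hτ : ∀ x : D, ‖τ x‖ ≤ C * (‖(x : H)‖ + ‖A x‖))
    (G : ℂ → h →L[ℂ] H)
    (hG : ∀ z (hz : z ∈ ρA) (ζ : h) (y : H),
      ⟪G z ζ, y⟫ = ⟪ζ, τ ⟨R ((starRingEnd ℂ) z) y, hmem _ (hρconj z hz) y⟩⟫)
    (hτsurj : Function.Surjective τ)
    (hker : Dense ((fun x : D => (x : H)) '' {x : D | τ x = 0}))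
    (h0 : (0 : ℂ) ∈ ρA)
    (hsub : ∀ z (hz : z ∈ ρA) (ζ : h), G 0 ζ - G z ζ ∈ D)
    (Γ : ℂ → h →L[ℂ] h)
    (hΓ : ∀ z (hz : z ∈ ρA) (ζ : h), Γ z ζ = τ ⟨G 0 ζ - G z ζ, hsub z hz ζ⟩)
    (Pr : h →L[ℂ] h) (hPrproj : Pr.comp Pr = Pr) (hPrsa : IsSelfAdjoint Pr)
    (DΘ : Submodule ℂ h) (hDΘ : (DΘ : Set h) ⊆ Set.range ⇑Pr)
    (hDΘdense : Set.range ⇑Pr ⊆ closure (DΘ : Set h))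
    (Θ : DΘ →ₗ[ℂ] h)
    (hΘran : ∀ x : DΘ, Θ x ∈ Set.range ⇑Pr)
    (hΘsym : ∀ x y : DΘ, ⟪Θ x, (y : h)⟫ = ⟪(x : h), Θ y⟫)
    (hΘsa : ∀ ζ η : h, ζ ∈ Set.range ⇑Pr → η ∈ Set.range ⇑Pr →
      (∀ x : DΘ, ⟪ζ, Θ x⟫ = ⟪η, (x : h)⟫) → ζ ∈ DΘ)
    (Z : Set ℂ) (hZρ : Z ⊆ ρA) (hZconj : ∀ z ∈ Z, (starRingEnd ℂ) z ∈ Z)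
    (B : ℂ → h →L[ℂ] h)
    (hBmem : ∀ z (hz : z ∈ Z) (ζ : h), B z ζ ∈ DΘ)
    (hB1 : ∀ z (hz : z ∈ Z), ∀ ζ ∈ Set.range ⇑Pr,
      Θ ⟨B z ζ, hBmem z hz ζ⟩ + Pr (Γ z (Pr (B z ζ))) = ζ)
    (hB2 : ∀ z ∈ Z, ∀ x : DΘ, B z (Θ x + Pr (Γ z (Pr (x : h)))) = (x : h))
    (hBPr : ∀ z ∈ Z, B z = Pr.comp ((B z).comp Pr))
 :
    (∀ x : D, τ x = 0 → extGraph D A τ (G 0) Pr DΘ Θ (x : H) (A x)) ∧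
    (∀ φ η φ' η' : H, extGraph D A τ (G 0) Pr DΘ Θ φ η →
      extGraph D A τ (G 0) Pr DΘ Θ φ' η' → ⟪η, φ'⟫ = ⟪φ, η'⟫) ∧
    (∀ φ η : H,
      (∀ ψ ξ : H, extGraph D A τ (G 0) Pr DΘ Θ ψ ξ → ⟪η, ψ⟫ = ⟪φ, ξ⟫) →
      extGraph D A τ (G 0) Pr DΘ Θ φ η) ∧
    (∀ z (hz : z ∈ Z) (y : H), ∃ η : H,
      extGraph D A τ (G 0) Pr DΘ Θ (kreinResolvent R G Pr B z y) η ∧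
        z • kreinResolvent R G Pr B z y - η = y) ∧
    (∀ z ∈ Z, ∀ φ η : H, extGraph D A τ (G 0) Pr DΘ Θ φ η →
      kreinResolvent R G Pr B z (z • φ - η) = φ) :=
  krein_selfadjoint_extension_general D A hsym ρA hρconj R hmem hres1 hres2 hRadj τ G hG hτsurj h0
    hsub Γ hΓ Pr hPrproj hPrsa DΘ hDΘ hDΘdense Θ hΘran hΘsym hΘsa Z hZρ B hBmem hB1 hB2
end

section
/- For λ ∈ ρ(A₀) real, λ is an eigenvalue of A_{Π,Θ} if and only if 0 is an eigenvalue of Γ_{λ,Π,Θ} = Θ + ΠΓ_λΠ. -/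
/- Abstract Krein framework (Posilicano): the self-adjoint operator A₀ on the
Hilbert space H is modeled by its domain `D`, its action `A`, its resolvent set
`ρA` and its resolvent family `R z = (-A₀+z)⁻¹`; `τ : 𝒟(A₀) → h` is bounded
w.r.t. the graph norm; `G z = (τ R_z̄)*` is characterized by the adjoint identity. -/

local notation "⟪" x ", " y "⟫" => @inner ℂ _ _ x y

/-- for real `λ ∈ ρ(A₀)`, `λ` is an eigenvalue of `A_{Pr,Θ}` iff
`0` is an eigenvalue of `Γ_{λ,Pr,Θ} = Θ + Pr Γ_λ Pr`. -/
theorem krein_eigenvalue_iff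
    {H h : Type*}
    [NormedAddCommGroup H] [InnerProductSpace ℂ H] [CompleteSpace H]
    [NormedAddCommGroup h] [InnerProductSpace ℂ h] [CompleteSpace h]
    (D : Submodule ℂ H) (hDdense : Dense (D : Set H))
    (A : D →ₗ[ℂ] H)
    (hsym : ∀ x y : D, ⟪A x, (y : H)⟫ = ⟪(x : H), A y⟫)
    (ρA : Set ℂ)
    (hρconj : ∀ z ∈ ρA, (starRingEnd ℂ) z ∈ ρA)
    (R : ℂ → H →L[ℂ] H)
    (hmem : ∀ z, z ∈ ρA → ∀ y : H, R z y ∈ D)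
    (hres1 : ∀ z (hz : z ∈ ρA) (y : H), z • R z y - A ⟨R z y, hmem z hz y⟩ = y)
    (hres2 : ∀ z ∈ ρA, ∀ x : D, R z (z • (x : H) - A x) = (x : H))
    (hRadj : ∀ z ∈ ρA, ContinuousLinearMap.adjoint (R z) = R ((starRingEnd ℂ) z))
    (τ : D →ₗ[ℂ] h) (C : ℝ)
    (hτ : ∀ x : D, ‖τ x‖ ≤ C * (‖(x : H)‖ + ‖A x‖))
    (G : ℂ → h →L[ℂ] H)
    (hG : ∀ z (hz : z ∈ ρA) (ζ : h) (y : H),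
      ⟪G z ζ, y⟫ = ⟪ζ, τ ⟨R ((starRingEnd ℂ) z) y, hmem _ (hρconj z hz) y⟩⟫)
    (hτsurj : Function.Surjective τ)
    (hker : Dense ((fun x : D => (x : H)) '' {x : D | τ x = 0}))
    (h0 : (0 : ℂ) ∈ ρA)
    (hsub : ∀ z (hz : z ∈ ρA) (ζ : h), G 0 ζ - G z ζ ∈ D)
    (Γ : ℂ → h →L[ℂ] h)
    (hΓ : ∀ z (hz : z ∈ ρA) (ζ : h), Γ z ζ = τ ⟨G 0 ζ - G z ζ, hsub z hz ζ⟩)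
    (Pr : h →L[ℂ] h) (hPrproj : Pr.comp Pr = Pr) (hPrsa : IsSelfAdjoint Pr)
    (DΘ : Submodule ℂ h) (hDΘ : (DΘ : Set h) ⊆ Set.range ⇑Pr)
    (hDΘdense : Set.range ⇑Pr ⊆ closure (DΘ : Set h))
    (Θ : DΘ →ₗ[ℂ] h)
    (hΘran : ∀ x : DΘ, Θ x ∈ Set.range ⇑Pr)
    (hΘsym : ∀ x y : DΘ, ⟪Θ x, (y : h)⟫ = ⟪(x : h), Θ y⟫)
    (hΘsa : ∀ ζ η : h, ζ ∈ Set.range ⇑Pr → η ∈ Set.range ⇑Pr →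
      (∀ x : DΘ, ⟪ζ, Θ x⟫ = ⟪η, (x : h)⟫) → ζ ∈ DΘ)
    (lam : ℝ) (hlam : (lam : ℂ) ∈ ρA) :
    (∃ φ : H, φ ≠ 0 ∧ extGraph D A τ (G 0) Pr DΘ Θ φ ((lam : ℂ) • φ)) ↔
      ∃ x : DΘ, (x : h) ≠ 0 ∧ Θ x + Pr (Γ (lam : ℂ) (Pr (x : h))) = 0 := by
  have hconj : (starRingEnd ℂ) ((lam : ℝ) : ℂ) = ((lam : ℝ) : ℂ) := Complex.conj_ofReal lam
  have hGlam : ∀ (ζ : h) (y : H),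
      ⟪G (lam:ℂ) ζ, y⟫ = ⟪ζ, τ ⟨R (lam:ℂ) y, hmem _ hlam y⟩⟫ := by
    intro ζ y
    rw [hG (lam:ℂ) hlam ζ y]
    refine congrArg (fun v => ⟪ζ, τ v⟫) (Subtype.ext ?_)
    show R ((starRingEnd ℂ) ((lam:ℝ):ℂ)) y = R (lam:ℂ) y
    rw [hconj]
  have hG0 : ∀ (ζ : h) (y : H),
      ⟪G 0 ζ, y⟫ = ⟪ζ, τ ⟨R 0 y, hmem 0 h0 y⟩⟫ := by
    intro ζ y
    rw [hG 0 h0 ζ y]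
    refine congrArg (fun v => ⟪ζ, τ v⟫) (Subtype.ext ?_)
    show R ((starRingEnd ℂ) 0) y = R 0 y
    rw [map_zero]
  have hresD : ∀ y : H,
      (⟨R 0 y, hmem 0 h0 y⟩ : D)
        = ⟨R (lam:ℂ) y, hmem _ hlam y⟩
          + (lam:ℂ) • ⟨R 0 (R (lam:ℂ) y), hmem 0 h0 _⟩ := by
    intro y
    apply Subtype.ext
    have h1 := hres1 (lam:ℂ) hlam y
    have hA : A ⟨R (lam:ℂ) y, hmem _ hlam y⟩ = (lam:ℂ) • R (lam:ℂ) y - y := by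
      rw [eq_sub_iff_add_eq, add_comm]
      exact (sub_eq_iff_eq_add.mp h1).symm
    have h2 := hres2 0 h0 ⟨R (lam:ℂ) y, hmem _ hlam y⟩
    rw [zero_smul, zero_sub, map_neg] at h2
    have h2' : R 0 (A ⟨R (lam:ℂ) y, hmem _ hlam y⟩) = -(R (lam:ℂ) y) :=
      neg_eq_iff_eq_neg.mp h2
    show R 0 y = R (lam:ℂ) y + (lam:ℂ) • R 0 (R (lam:ℂ) y)
    conv_lhs => rw [← h1]
    rw [map_sub, map_smul, h2']
    abel
  have hRself : ContinuousLinearMap.adjoint (R (lam:ℂ)) = R (lam:ℂ) := by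
    rw [hRadj _ hlam, hconj]
  have hRsa : ∀ x y : H, ⟪R (lam:ℂ) x, y⟫ = ⟪x, R (lam:ℂ) y⟫ := by
    intro x y
    conv_rhs => rw [← hRself]
    rw [ContinuousLinearMap.adjoint_inner_right]
  have key : ∀ ζ : h, (lam:ℂ) • R (lam:ℂ) (G 0 ζ) = G 0 ζ - G (lam:ℂ) ζ := by
    intro ζ
    apply ext_inner_right ℂ
    intro y
    have hτeq : τ ⟨R 0 y, hmem 0 h0 y⟩
        = τ ⟨R (lam:ℂ) y, hmem _ hlam y⟩
          + (lam:ℂ) • τ ⟨R 0 (R (lam:ℂ) y), hmem 0 h0 _⟩ := by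
      rw [hresD y, map_add, map_smul]
    calc ⟪(lam:ℂ) • R (lam:ℂ) (G 0 ζ), y⟫
        = (lam:ℂ) * ⟪G 0 ζ, R (lam:ℂ) y⟫ := by
          rw [inner_smul_left, hRsa, hconj]
      _ = (lam:ℂ) * ⟪ζ, τ ⟨R 0 (R (lam:ℂ) y), hmem 0 h0 _⟩⟫ := by
          rw [hG0 ζ (R (lam:ℂ) y)]
      _ = ⟪ζ, τ ⟨R 0 y, hmem 0 h0 y⟩⟫ - ⟪ζ, τ ⟨R (lam:ℂ) y, hmem _ hlam y⟩⟫ := by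
          rw [hτeq, inner_add_right, inner_smul_right]; ring
      _ = ⟪G 0 ζ - G (lam:ℂ) ζ, y⟫ := by rw [inner_sub_left, hG0, hGlam]
  have hGinj : ∀ ζ : h, G (lam:ℂ) ζ = 0 → ζ = 0 := by
    intro ζ hz
    have hall : ∀ u : h, ⟪ζ, u⟫ = 0 := by
      intro u
      obtain ⟨x, hx⟩ := hτsurj u
      have hR : R (lam:ℂ) ((lam:ℂ) • (x:H) - A x) = (x:H) := hres2 _ hlam x
      have hxD : (⟨R (lam:ℂ) ((lam:ℂ) • (x:H) - A x), hmem _ hlam _⟩ : D) = x :=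
        Subtype.ext hR
      have h4 := hGlam ζ ((lam:ℂ) • (x:H) - A x)
      rw [hz, hxD, hx] at h4
      simpa using h4.symm
    have hzz := hall ζ
    rwa [inner_self_eq_zero] at hzz
  have hmemφ : ∀ ζ : h, G (lam:ℂ) ζ - G 0 ζ ∈ D := by
    intro ζ
    have := neg_mem (hsub (lam:ℂ) hlam ζ)
    rwa [neg_sub] at this
  have hτφ : ∀ ζ : h, τ ⟨G (lam:ℂ) ζ - G 0 ζ, hmemφ ζ⟩ = -(Γ (lam:ℂ) ζ) := by
    intro ζ
    have hD : (⟨G (lam:ℂ) ζ - G 0 ζ, hmemφ ζ⟩ : D)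
        = -⟨G 0 ζ - G (lam:ℂ) ζ, hsub _ hlam ζ⟩ := Subtype.ext (by simp)
    rw [hD, map_neg, hΓ _ hlam ζ]
  have hPr : ∀ ζ ∈ DΘ, Pr ζ = ζ := by
    intro ζ hζ
    obtain ⟨w, hw⟩ := hDΘ hζ
    rw [← hw, ← ContinuousLinearMap.comp_apply, hPrproj]
  constructor
  · rintro ⟨φ, hφne, φ₀, ζ, hζ, hφeq, hPrτ, hη⟩
    have h5 : (lam:ℂ) • (φ₀:H) - A φ₀ = -((lam:ℂ) • G 0 ζ) := by
      rw [← hη, hφeq, smul_add]; abel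
    have h6 := hres2 _ hlam φ₀
    rw [h5, map_neg, map_smul, key ζ] at h6
    have hφ0 : (φ₀ : H) = G (lam:ℂ) ζ - G 0 ζ := by rw [← h6, neg_sub]
    have hφζ : φ = G (lam:ℂ) ζ := by rw [hφeq, hφ0]; abel
    have hζne : ζ ≠ 0 := by
      intro hz
      exact hφne (by rw [hφζ, hz, map_zero])
    refine ⟨⟨ζ, hζ⟩, hζne, ?_⟩
    have hφ0D : φ₀ = (⟨G (lam:ℂ) ζ - G 0 ζ, hmemφ ζ⟩ : D) := Subtype.ext hφ0
    have hPrτ' : Pr (τ φ₀) = -(Pr (Γ (lam:ℂ) ζ)) := by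
      rw [hφ0D, hτφ, map_neg]
    show Θ ⟨ζ, hζ⟩ + Pr (Γ (lam:ℂ) (Pr ζ)) = 0
    rw [hPr ζ hζ, ← hPrτ, hPrτ']
    abel
  · rintro ⟨x, hx0, hxeq⟩
    set ζ := (x : h) with hζdef
    have hPrζ : Pr ζ = ζ := hPr ζ x.2
    have hΘx : Θ x = -(Pr (Γ (lam:ℂ) (Pr ζ))) := by
      rwa [add_eq_zero_iff_eq_neg] at hxeq
    refine ⟨G (lam:ℂ) ζ, ?_, ⟨G (lam:ℂ) ζ - G 0 ζ, hmemφ ζ⟩, ζ, x.2, ?_, ?_, ?_⟩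
    · intro hz; exact hx0 (hGinj ζ hz)
    · show G (lam:ℂ) ζ = (G (lam:ℂ) ζ - G 0 ζ) + G 0 ζ
      abel
    · have hxx : (⟨ζ, x.2⟩ : DΘ) = x := rfl
      rw [hτφ, map_neg, hxx, hΘx, hPrζ]
    · have hDeq : (⟨G (lam:ℂ) ζ - G 0 ζ, hmemφ ζ⟩ : D)
          = (-(lam:ℂ)) • ⟨R (lam:ℂ) (G 0 ζ), hmem _ hlam _⟩ := by
        apply Subtype.ext
        show G (lam:ℂ) ζ - G 0 ζ = (-(lam:ℂ)) • R (lam:ℂ) (G 0 ζ)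
        rw [neg_smul, key ζ, neg_sub]
      rw [hDeq, map_smul]
      have hA : A ⟨R (lam:ℂ) (G 0 ζ), hmem _ hlam _⟩
          = (lam:ℂ) • R (lam:ℂ) (G 0 ζ) - G 0 ζ := by
        rw [eq_sub_iff_add_eq, add_comm]
        exact (sub_eq_iff_eq_add.mp (hres1 (lam:ℂ) hlam (G 0 ζ))).symm
      rw [hA, key ζ]
      show (lam:ℂ) • G (lam:ℂ) ζ = (-(lam:ℂ)) • ((G 0 ζ - G (lam:ℂ) ζ) - G 0 ζ)
      module
end

section
/- For λ ∈ σ_p(A_{Π,Θ}) ∩ ρ(A₀), the map G_λ restricts to a bijection from Ker(Γ_{λ,Π,Θ}) onto Ker(−A_{Π,Θ} + λ). -/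
/- Abstract Krein framework (Posilicano): the self-adjoint operator A₀ on the
Hilbert space H is modeled by its domain `D`, its action `A`, its resolvent set
`ρA` and its resolvent family `R z = (-A₀+z)⁻¹`; `τ : 𝒟(A₀) → h` is bounded
w.r.t. the graph norm; `G z = (τ R_z̄)*` is characterized by the adjoint identity. -/

local notation "⟪" x ", " y "⟫" => @inner ℂ _ _ x y

/-- for `λ ∈ σ_p(A_{Pr,Θ}) ∩ ρ(A₀)`, `G_λ` restricts to a
bijection from `Ker Γ_{λ,Pr,Θ}` onto `Ker(-A_{Pr,Θ} + λ)`. -/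
theorem krein_Glambda_bijection
    {H h : Type*}
    [NormedAddCommGroup H] [InnerProductSpace ℂ H] [CompleteSpace H]
    [NormedAddCommGroup h] [InnerProductSpace ℂ h] [CompleteSpace h]
    (D : Submodule ℂ H) (hDdense : Dense (D : Set H))
    (A : D →ₗ[ℂ] H)
    (hsym : ∀ x y : D, ⟪A x, (y : H)⟫ = ⟪(x : H), A y⟫)
    (ρA : Set ℂ)
    (hρconj : ∀ z ∈ ρA, (starRingEnd ℂ) z ∈ ρA)
    (R : ℂ → H →L[ℂ] H)
    (hmem : ∀ z, z ∈ ρA → ∀ y : H, R z y ∈ D)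
    (hres1 : ∀ z (hz : z ∈ ρA) (y : H), z • R z y - A ⟨R z y, hmem z hz y⟩ = y)
    (hres2 : ∀ z ∈ ρA, ∀ x : D, R z (z • (x : H) - A x) = (x : H))
    (hRadj : ∀ z ∈ ρA, ContinuousLinearMap.adjoint (R z) = R ((starRingEnd ℂ) z))
    (τ : D →ₗ[ℂ] h) (C : ℝ)
    (hτ : ∀ x : D, ‖τ x‖ ≤ C * (‖(x : H)‖ + ‖A x‖))
    (G : ℂ → h →L[ℂ] H)
    (hG : ∀ z (hz : z ∈ ρA) (ζ : h) (y : H),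
      ⟪G z ζ, y⟫ = ⟪ζ, τ ⟨R ((starRingEnd ℂ) z) y, hmem _ (hρconj z hz) y⟩⟫)
    (hτsurj : Function.Surjective τ)
    (hker : Dense ((fun x : D => (x : H)) '' {x : D | τ x = 0}))
    (h0 : (0 : ℂ) ∈ ρA)
    (hsub : ∀ z (hz : z ∈ ρA) (ζ : h), G 0 ζ - G z ζ ∈ D)
    (Γ : ℂ → h →L[ℂ] h)
    (hΓ : ∀ z (hz : z ∈ ρA) (ζ : h), Γ z ζ = τ ⟨G 0 ζ - G z ζ, hsub z hz ζ⟩)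
    (Pr : h →L[ℂ] h) (hPrproj : Pr.comp Pr = Pr) (hPrsa : IsSelfAdjoint Pr)
    (DΘ : Submodule ℂ h) (hDΘ : (DΘ : Set h) ⊆ Set.range ⇑Pr)
    (hDΘdense : Set.range ⇑Pr ⊆ closure (DΘ : Set h))
    (Θ : DΘ →ₗ[ℂ] h)
    (hΘran : ∀ x : DΘ, Θ x ∈ Set.range ⇑Pr)
    (hΘsym : ∀ x y : DΘ, ⟪Θ x, (y : h)⟫ = ⟪(x : h), Θ y⟫)
    (hΘsa : ∀ ζ η : h, ζ ∈ Set.range ⇑Pr → η ∈ Set.range ⇑Pr →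
      (∀ x : DΘ, ⟪ζ, Θ x⟫ = ⟪η, (x : h)⟫) → ζ ∈ DΘ)
    (lam : ℝ) (hlam : (lam : ℂ) ∈ ρA)
    (heigen : ∃ φ : H, φ ≠ 0 ∧ extGraph D A τ (G 0) Pr DΘ Θ φ ((lam : ℂ) • φ)) :
    (∀ x : DΘ, Θ x + Pr (Γ (lam : ℂ) (Pr (x : h))) = 0 →
      extGraph D A τ (G 0) Pr DΘ Θ (G (lam : ℂ) (x : h))
        ((lam : ℂ) • G (lam : ℂ) (x : h))) ∧
    (∀ x y : DΘ, Θ x + Pr (Γ (lam : ℂ) (Pr (x : h))) = 0 →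
      Θ y + Pr (Γ (lam : ℂ) (Pr (y : h))) = 0 →
      G (lam : ℂ) (x : h) = G (lam : ℂ) (y : h) → x = y) ∧
    (∀ φ : H, extGraph D A τ (G 0) Pr DΘ Θ φ ((lam : ℂ) • φ) →
      ∃ x : DΘ, Θ x + Pr (Γ (lam : ℂ) (Pr (x : h))) = 0 ∧
        G (lam : ℂ) (x : h) = φ) := by
  -- basic helpers
  have hτc : ∀ (a b : H) (ha : a ∈ D) (hb : b ∈ D), a = b → τ ⟨a, ha⟩ = τ ⟨b, hb⟩ := by
    rintro a b ha hb rfl; rfl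
  have hAc : ∀ (a b : H) (ha : a ∈ D) (hb : b ∈ D), a = b → A ⟨a, ha⟩ = A ⟨b, hb⟩ := by
    rintro a b ha hb rfl; rfl
  have hlc : (starRingEnd ℂ) ((lam : ℝ) : ℂ) = ((lam : ℝ) : ℂ) := Complex.conj_ofReal lam
  have h0c : (starRingEnd ℂ) (0 : ℂ) = (0 : ℂ) := map_zero _
  -- adjoint characterization of G at 0 and lam with cleaned-up conjugates
  have hG0 : ∀ (ζ : h) (y : H), ⟪G 0 ζ, y⟫ = ⟪ζ, τ ⟨R 0 y, hmem 0 h0 y⟩⟫ := by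
    intro ζ y
    rw [hG 0 h0 ζ y, hτc _ _ _ (hmem 0 h0 y) (by rw [h0c])]
  have hGl : ∀ (ζ : h) (y : H),
      ⟪G (lam : ℂ) ζ, y⟫ = ⟪ζ, τ ⟨R (lam : ℂ) y, hmem _ hlam y⟩⟫ := by
    intro ζ y
    rw [hG (lam : ℂ) hlam ζ y, hτc _ _ _ (hmem _ hlam y) (by rw [hlc])]
  -- R 0 kills A : for x in D, R 0 (A x) = - x
  have hR0A : ∀ x : D, R 0 (A x) = -(x : H) := by
    intro x
    have := hres2 0 h0 x
    rw [zero_smul, zero_sub, map_neg] at this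
    rw [← this, neg_neg]
  -- resolvent identity at (0, lam)
  have hresid : ∀ y : H,
      R 0 y - R (lam : ℂ) y = (lam : ℂ) • R 0 (R (lam : ℂ) y) := by
    intro y
    have h1 := hres1 (lam : ℂ) hlam y
    have h2 : R 0 (A ⟨R (lam : ℂ) y, hmem _ hlam y⟩) = -(R (lam : ℂ) y) := hR0A _
    have h3 : A ⟨R (lam : ℂ) y, hmem _ hlam y⟩ = (lam : ℂ) • R (lam : ℂ) y - y := by
      rw [sub_eq_iff_eq_add] at h1
      rw [h1]; abel
    rw [h3, map_sub, map_smul, sub_eq_iff_eq_add] at h2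
    rw [h2]; abel
  -- key lemma : A (G0 ζ - G lam ζ) = - lam • G lam ζ
  have key : ∀ ζ : h,
      A ⟨G 0 ζ - G (lam : ℂ) ζ, hsub _ hlam ζ⟩ = -((lam : ℂ)) • G (lam : ℂ) ζ := by
    intro ζ
    set ψ : D := ⟨G 0 ζ - G (lam : ℂ) ζ, hsub _ hlam ζ⟩ with hψ
    set u : H := (lam : ℂ) • (ψ : H) - A ψ with hu
    have hRu : R (lam : ℂ) u = (ψ : H) := hres2 _ hlam ψ
    have hadj : R (lam : ℂ) = ContinuousLinearMap.adjoint (R (lam : ℂ)) := by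
      rw [hRadj _ hlam, hlc]
    have h1 : ∀ y : H, ⟪u, R (lam : ℂ) y⟫ = ⟪(ψ : H), y⟫ := by
      intro y
      conv_lhs => rw [hadj]
      rw [ContinuousLinearMap.adjoint_inner_right, hRu]
    have h2 : ∀ y : H, ⟪(ψ : H), y⟫ = ⟪(lam : ℂ) • G 0 ζ, R (lam : ℂ) y⟫ := by
      intro y
      have e1 : ((ψ : H)) = G 0 ζ - G (lam : ℂ) ζ := rfl
      have e2 : (⟨R 0 y, hmem 0 h0 y⟩ : D) - ⟨R (lam : ℂ) y, hmem _ hlam y⟩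
          = (lam : ℂ) • (⟨R 0 (R (lam : ℂ) y), hmem 0 h0 _⟩ : D) := by
        apply Subtype.ext
        push_cast
        exact hresid y
      calc ⟪(ψ : H), y⟫ = ⟪G 0 ζ, y⟫ - ⟪G (lam : ℂ) ζ, y⟫ := by
              rw [e1, inner_sub_left]
        _ = ⟪ζ, τ ((⟨R 0 y, hmem 0 h0 y⟩ : D) - ⟨R (lam : ℂ) y, hmem _ hlam y⟩)⟫ := by
              rw [map_sub, inner_sub_right, hG0, hGl]
        _ = (lam : ℂ) * ⟪ζ, τ ⟨R 0 (R (lam : ℂ) y), hmem 0 h0 _⟩⟫ := by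
              rw [e2, map_smul, inner_smul_right]
        _ = (lam : ℂ) * ⟪G 0 ζ, R (lam : ℂ) y⟫ := by rw [hG0]
        _ = ⟪(lam : ℂ) • G 0 ζ, R (lam : ℂ) y⟫ := by
              rw [inner_smul_left, hlc]
    have h3 : ∀ d : D, ⟪u - (lam : ℂ) • G 0 ζ, (d : H)⟫ = 0 := by
      intro d
      have hd : R (lam : ℂ) ((lam : ℂ) • (d : H) - A d) = (d : H) := hres2 _ hlam d
      rw [inner_sub_left, ← hd, h1, h2, sub_self]
    have h5 : u - (lam : ℂ) • G 0 ζ = 0 := by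
      have htop : D.topologicalClosure = ⊤ :=
        Submodule.dense_iff_topologicalClosure_eq_top.mp hDdense
      have hbot : Dᗮ = ⊥ := Submodule.topologicalClosure_eq_top_iff.mp htop
      have hmemo : u - (lam : ℂ) • G 0 ζ ∈ Dᗮ := by
        rw [Submodule.mem_orthogonal]
        intro v hv
        rw [← inner_conj_symm, h3 ⟨v, hv⟩, map_zero]
      rw [hbot] at hmemo
      simpa using hmemo
    have hu' : u = (lam : ℂ) • G 0 ζ := by
      have := sub_eq_zero.mp h5; exact this
    have : A ψ = (lam : ℂ) • (ψ : H) - u := by rw [hu]; abel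
    rw [this, hu']
    have e1 : ((ψ : H)) = G 0 ζ - G (lam : ℂ) ζ := rfl
    rw [e1, smul_sub]
    module
  -- projection fixes DΘ
  have hPrfix : ∀ x : DΘ, Pr (x : h) = (x : h) := by
    intro x
    obtain ⟨w, hw⟩ := hDΘ x.2
    have : Pr (Pr w) = Pr w := by
      have := congrFun (congrArg (fun T : h →L[ℂ] h => (T : h → h)) hPrproj) w
      simpa using this
    rw [← hw, this]
  -- injectivity of G lam on all of h
  have hGinj : ∀ ζ : h, G (lam : ℂ) ζ = 0 → ζ = 0 := by
    intro ζ hz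
    have hk : A (⟨G 0 ζ - G (lam : ℂ) ζ, hsub _ hlam ζ⟩ : D) = 0 := by
      rw [key ζ, hz, smul_zero]
    -- so A ⟨G0 ζ - G lam ζ⟩ = 0 ; apply R 0 identity
    have h1 := hres2 0 h0 ⟨G 0 ζ - G (lam : ℂ) ζ, hsub _ hlam ζ⟩
    rw [hk, sub_zero, zero_smul, map_zero] at h1
    have hG0z : G 0 ζ = 0 := by
      have : G 0 ζ - G (lam : ℂ) ζ = 0 := h1.symm
      rw [hz, sub_zero] at this; exact this
    -- ζ is orthogonal to the range of τ ∘ R 0 = h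
    have hall : ∀ ξ : h, ⟪ζ, ξ⟫ = 0 := by
      intro ξ
      obtain ⟨d, hd⟩ := hτsurj ξ
      have hy : R 0 ((0 : ℂ) • (d : H) - A d) = (d : H) := hres2 0 h0 d
      have : ⟪ζ, τ ⟨R 0 ((0 : ℂ) • (d : H) - A d), hmem 0 h0 _⟩⟫ = 0 := by
        rw [← hG0 ζ _, hG0z]
        simp
      rw [hτc _ _ _ d.2 hy] at this
      simpa [hd] using this
    have := hall ζ
    rwa [inner_self_eq_zero] at this
  refine ⟨?_, ?_, ?_⟩
  · -- part 1
    intro x hx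
    rw [hPrfix x] at hx
    have hmemφ₀ : G (lam : ℂ) (x : h) - G 0 (x : h) ∈ D := by
      have := D.neg_mem (hsub _ hlam (x : h))
      simpa [neg_sub] using this
    refine ⟨⟨G (lam : ℂ) (x : h) - G 0 (x : h), hmemφ₀⟩, (x : h), x.2,
      by
        show G ((lam : ℝ) : ℂ) (x : h)
            = (G ((lam : ℝ) : ℂ) (x : h) - G 0 (x : h)) + G 0 (x : h)
        abel, ?_, ?_⟩
    · have hneg : (⟨G (lam : ℂ) (x : h) - G 0 (x : h), hmemφ₀⟩ : D)
          = -⟨G 0 (x : h) - G (lam : ℂ) (x : h), hsub _ hlam (x : h)⟩ := by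
        apply Subtype.ext; push_cast; abel
      rw [hneg, map_neg, map_neg, ← hΓ _ hlam (x : h)]
      have : Θ ⟨(x : h), x.2⟩ = Θ x := rfl
      rw [this]
      have := add_eq_zero_iff_eq_neg.mp hx
      rw [this]
    · have hneg : (⟨G (lam : ℂ) (x : h) - G 0 (x : h), hmemφ₀⟩ : D)
          = -⟨G 0 (x : h) - G (lam : ℂ) (x : h), hsub _ hlam (x : h)⟩ := by
        apply Subtype.ext; push_cast; abel
      rw [hneg, map_neg, key (x : h)]
      module
  · -- part 2
    intro x y hx hy hxy
    have hz : G (lam : ℂ) ((x : h) - (y : h)) = 0 := by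
      rw [map_sub, hxy, sub_self]
    have := hGinj _ hz
    exact Subtype.ext (sub_eq_zero.mp this)
  · -- part 3
    rintro φ ⟨φ₀, ζ, hζ, hφ, hPrτ, hη⟩
    set ψ : D := ⟨G 0 ζ - G (lam : ℂ) ζ, hsub _ hlam ζ⟩ with hψdef
    have hAψ : A ψ = -((lam : ℂ)) • G (lam : ℂ) ζ := key ζ
    -- ψ = R lam (lam • G0 ζ)
    have hψR : (ψ : H) = R (lam : ℂ) ((lam : ℂ) • G 0 ζ) := by
      have h1 := hres2 _ hlam ψ
      have h2 : (lam : ℂ) • (ψ : H) - A ψ = (lam : ℂ) • G 0 ζ := by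
        rw [hAψ]
        have : ((ψ : H)) = G 0 ζ - G (lam : ℂ) ζ := rfl
        rw [this]; module
      rw [h2] at h1; exact h1.symm
    -- φ₀ = R lam (-(lam • G0 ζ))
    have hφ₀R : (φ₀ : H) = R (lam : ℂ) (-((lam : ℂ) • G 0 ζ)) := by
      have h1 := hres2 _ hlam φ₀
      have h2 : (lam : ℂ) • (φ₀ : H) - A φ₀ = -((lam : ℂ) • G 0 ζ) := by
        rw [← hη, hφ]; module
      rw [h2] at h1; exact h1.symm
    have hφ₀ψ : (φ₀ : H) = -(ψ : H) := by
      rw [hφ₀R, map_neg, ← hψR]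
    have hφval : φ = G (lam : ℂ) ζ := by
      rw [hφ, hφ₀ψ]
      have : ((ψ : H)) = G 0 ζ - G (lam : ℂ) ζ := rfl
      rw [this]; abel
    refine ⟨⟨ζ, hζ⟩, ?_, hφval.symm⟩
    have hPrζ : Pr ζ = ζ := hPrfix ⟨ζ, hζ⟩
    rw [hPrζ, ← hPrτ, hΓ _ hlam ζ]
    have hsum : τ φ₀ + τ ψ = 0 := by
      rw [← map_add]
      have : φ₀ + ψ = 0 := by
        apply Subtype.ext; push_cast; rw [hφ₀ψ]; abel
      rw [this, map_zero]
    rw [← map_add, hsum, map_zero]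
end

section
/- In the disc example, the matrix of Γ_z := −z τ_a(−A₀+z)⁻¹G₀ in the basis {e_k} is diagonal with [Γ_z]_{kk} = −z(k²+1)^{1/2} ∑_{m=1}^∞ ν²_{m|k|} / (λ²_{m|k|}(λ²_{m|k|}+z)). -/
open Filter
open scoped ComplexConjugate

local notation "⟪" x ", " y "⟫" => @inner ℂ _ _ x y

/-!
Since `G` is defined by `⟪G_w ζ, y⟫ = ⟪ζ, τ R_{w̄} y⟫`, the matrix element is
`⟪e_i, Γ_z e_k⟫ = -z ⟪G_{z̄} e_i, G₀ e_k⟫`, which Parseval's identity in the eigenbasis `U_{mn}`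
expands as a sum over `(m, n)`. The resolvent acts on `U_{mn}` by `(λ²_{m|n|} + w)⁻¹`, so
`⟪G_w e_i, U_{mn}⟫ = (λ²_{m|n|} + w̄)⁻¹ (n²+1)^{1/4} ν_{m|n|} δ_{in}`: only `n = i = k` contributes.
-/

theorem LinearMapClass.apply_eq_inv_smul_of_apply_sub_smul
    {𝕜 E F : Type*} [Field 𝕜] [AddCommGroup E] [Module 𝕜 E]
    [FunLike F E E] [LinearMapClass F 𝕜 E E] (R : F) {w μ : 𝕜} {x : E} (hx : x ≠ 0)
    (hR : R (w • x - μ • x) = x) : R x = (w - μ)⁻¹ • x := by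
  rw [← sub_smul, map_smul] at hR
  have hne : w - μ ≠ 0 := by
    rintro h0
    rw [h0, zero_smul] at hR
    exact hx hR.symm
  exact (eq_inv_smul_iff₀ hne).mpr hR

section
variable {𝕜 E F : Type*} [RCLike 𝕜]
  [NormedAddCommGroup E] [InnerProductSpace 𝕜 E] [NormedAddCommGroup F] [InnerProductSpace 𝕜 F]

theorem inner_eq_inv_mul_inner_of_eigen {D : Submodule 𝕜 E} {A : D →ₗ[𝕜] E}
    {R : E →L[𝕜] E} {τ : D →ₗ[𝕜] F} {G : F →L[𝕜] E} (hmem : ∀ y, R y ∈ D)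
    (hG : ∀ ζ y, inner 𝕜 (G ζ) y = inner 𝕜 ζ (τ ⟨R y, hmem y⟩)) {w μ : 𝕜} {x : D}
    (hx : (x : E) ≠ 0) (hAx : A x = μ • (x : E)) (hR : R (w • (x : E) - A x) = x) (ζ : F) :
    inner 𝕜 (G ζ) (x : E) = (w - μ)⁻¹ * inner 𝕜 ζ (τ x) := by
  have hRx : (⟨R x, hmem x⟩ : D) = (w - μ)⁻¹ • x := Subtype.ext <|
    LinearMapClass.apply_eq_inv_smul_of_apply_sub_smul R hx (hAx ▸ hR)
  rw [hG, hRx, map_smul, inner_smul_right]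

theorem HilbertBasis.inner_eq_ite_tsum_of_supported_fiber {ι κ : Type*} [DecidableEq κ]
    (b : HilbertBasis (ι × κ) 𝕜 E) {x y : E} {i k : κ} {f g : ι × κ → 𝕜}
    (hx : ∀ p, inner 𝕜 x (b p) = if i = p.2 then f p else 0)
    (hy : ∀ p, inner 𝕜 (b p) y = if k = p.2 then g p else 0) :
    inner 𝕜 x y = if i = k then ∑' m, f (m, k) * g (m, k) else 0 := by
  have hsum := b.hasSum_inner_mul_inner x y
  simp only [hx, hy] at hsum
  split_ifs with hik
  · subst hik
    have hoff : ∀ p ∉ Set.range (fun m : ι => (m, i)),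
        ((if i = p.2 then f p else 0) * if i = p.2 then g p else 0) = 0 := by
      rintro ⟨m, n⟩ hp
      have hn : i ≠ n := fun h => hp ⟨m, by rw [h]⟩
      simp [hn]
    have hinj : Function.Injective (fun m : ι => (m, i)) := fun _ _ h => (Prod.ext_iff.mp h).1
    exact (((hinj.hasSum_iff hoff).mpr hsum).congr_fun (fun m => by simp)).tsum_eq.symm
  · refine hsum.unique (hasSum_zero.congr_fun fun p => ?_)
    by_cases hp : i = p.2
    · have hpk : k ≠ p.2 := hp ▸ Ne.symm hik
      simp [hp, hpk]
    · simp [hp]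
end

theorem Real.rpow_one_fourth_sq {t : ℝ} (ht : 0 ≤ t) :
    (t ^ ((1 : ℝ) / 4)) ^ 2 = t ^ ((1 : ℝ) / 2) := by
  rw [← Real.rpow_natCast, ← Real.rpow_mul ht]
  norm_num

theorem disc_Gamma_matrix_elements_general
    {H h : Type*}
    [NormedAddCommGroup H] [InnerProductSpace ℂ H] [CompleteSpace H]
    [NormedAddCommGroup h] [InnerProductSpace ℂ h]
    (D : Submodule ℂ H)
    (A : D →ₗ[ℂ] H)
    (ρA : Set ℂ) (h0ρ : (0 : ℂ) ∈ ρA)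
    (hρconj : ∀ z ∈ ρA, (starRingEnd ℂ) z ∈ ρA)
    (R : ℂ → H →L[ℂ] H)
    (hmem : ∀ z, z ∈ ρA → ∀ y : H, R z y ∈ D)
    (hres2 : ∀ z ∈ ρA, ∀ x : D, R z (z • (x : H) - A x) = (x : H))
    (τ : D →ₗ[ℂ] h)
    (G : ℂ → h →L[ℂ] H)
    (hG : ∀ z (hz : z ∈ ρA) (ζ : h) (y : H),
      ⟪G z ζ, y⟫ = ⟪ζ, τ ⟨R ((starRingEnd ℂ) z) y, hmem _ (hρconj z hz) y⟩⟫)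
    -- `Γ_z = -z τ_a (-A₀+z)⁻¹ G₀`:
    (Γ : ℂ → h →L[ℂ] h)
    (hΓ : ∀ z (hz : z ∈ ρA) (ζ : h),
      Γ z ζ = (-z) • τ ⟨R z (G 0 ζ), hmem z hz (G 0 ζ)⟩)
    -- the radial data of the disc example:
    (lamv : ℕ → ℕ → ℝ) (ν : ℕ → ℕ → ℝ)
    -- the orthonormal eigenbasis `U_{mn}` of `L²(D)`:
    (U : ℕ → ℤ → H)
    (hUon : Orthonormal ℂ (fun p : ℕ × ℤ => U p.1 p.2))
    (hUtotal : ⊤ ≤ (Submodule.span ℂ (Set.range fun p : ℕ × ℤ => U p.1 p.2)).topologicalClosure)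
    (hUmem : ∀ m n, U m n ∈ D)
    (hAU : ∀ (m : ℕ) (n : ℤ),
      A ⟨U m n, hUmem m n⟩ = (-((lamv m n.natAbs : ℂ) ^ 2)) • U m n)
    -- the orthonormal basis `e_k` of `H^{1/2}(S¹)`:
    (e : ℤ → h) (heon : Orthonormal ℂ e)
    -- `τ_a U_{mn} = (n²+1)^{1/4} ν_{m|n|} e_n`:
    (hτU : ∀ (m : ℕ) (n : ℤ),
      τ ⟨U m n, hUmem m n⟩ =
        (((((n : ℝ) ^ 2 + 1) ^ ((1 : ℝ) / 4) * ν m n.natAbs : ℝ) : ℂ)) • e n) :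
    ∀ z (hz : z ∈ ρA) (i k : ℤ),
      ⟪e i, Γ z (e k)⟫ =
        if i = k then
          (-z) * ((((k : ℝ) ^ 2 + 1) ^ ((1 : ℝ) / 2) : ℝ) : ℂ) *
            ∑' m : ℕ, ((ν m k.natAbs : ℝ) : ℂ) ^ 2 /
              (((lamv m k.natAbs : ℂ) ^ 2) * ((lamv m k.natAbs : ℂ) ^ 2 + z))
        else 0 := by
  intro z hz i k
  set L : ℕ × ℤ → ℂ := fun p => (lamv p.1 p.2.natAbs : ℂ) ^ 2
  set c : ℕ × ℤ → ℂ := fun p => (((p.2 : ℝ) ^ 2 + 1) ^ ((1 : ℝ) / 4) * ν p.1 p.2.natAbs : ℝ)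
  have hGU : ∀ w (hw : w ∈ ρA) ζ m n,
      ⟪G w ζ, U m n⟫ = (conj w + L (m, n))⁻¹ * (c (m, n) * ⟪ζ, e n⟫) := by
    intro w hw ζ m n
    rw [inner_eq_inv_mul_inner_of_eigen (fun y => hmem _ (hρconj w hw) y) (hG w hw)
      (hUon.ne_zero (m, n)) (hAU m n) (hres2 _ (hρconj w hw) _), hτU, inner_smul_right,
      sub_neg_eq_add]
  have he := orthonormal_iff_ite.mp heon
  have hΓG : ⟪e i, Γ z (e k)⟫ = -z * ⟪G (conj z) (e i), G 0 (e k)⟫ := by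
    rw [hΓ z hz, inner_smul_right, hG _ (hρconj z hz)]
    simp only [Complex.conj_conj]
  set b := HilbertBasis.mk hUon hUtotal
  have hb : ∀ p, b p = U p.1 p.2 := fun p => congrFun (HilbertBasis.coe_mk hUon hUtotal) p
  have hGb : ∀ p, ⟪G (conj z) (e i), b p⟫ = if i = p.2 then (z + L p)⁻¹ * c p else 0 := by
    intro p
    rw [hb, hGU _ (hρconj z hz), he, Complex.conj_conj]
    split_ifs <;> simp
  have hbG : ∀ p, ⟪b p, G 0 (e k)⟫ = if k = p.2 then (L p)⁻¹ * c p else 0 := by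
    intro p
    rw [hb, ← inner_conj_symm, hGU _ h0ρ, he]
    split_ifs <;> simp [L, c]
  rw [hΓG, b.inner_eq_ite_tsum_of_supported_fiber hGb hbG]
  split_ifs with hik
  · rw [mul_assoc]
    congr 1
    rw [← tsum_mul_left]
    refine tsum_congr fun m => ?_
    simp only [L, c]
    rw [← Real.rpow_one_fourth_sq (by positivity), ← div_div]
    push_cast
    ring
  · rw [mul_zero]

/-- in the rotation-invariant disc example, the matrix of
`Γ_z := -z τ_a (-A₀+z)⁻¹ G₀` in the orthonormal basis `{e_k}` of `H^{1/2}(S¹)`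
is diagonal with
`[Γ_z]_{kk} = -z (k²+1)^{1/2} ∑_{m} ν²_{m|k|}/(λ²_{m|k|}(λ²_{m|k|}+z))`. -/
theorem disc_Gamma_matrix_elements
    {H h : Type*}
    [NormedAddCommGroup H] [InnerProductSpace ℂ H] [CompleteSpace H]
    [NormedAddCommGroup h] [InnerProductSpace ℂ h] [CompleteSpace h]
    (D : Submodule ℂ H) (hDdense : Dense (D : Set H))
    (A : D →ₗ[ℂ] H)
    (hsym : ∀ x y : D, ⟪A x, (y : H)⟫ = ⟪(x : H), A y⟫)
    (ρA : Set ℂ) (h0ρ : (0 : ℂ) ∈ ρA)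
    (hρconj : ∀ z ∈ ρA, (starRingEnd ℂ) z ∈ ρA)
    (R : ℂ → H →L[ℂ] H)
    (hmem : ∀ z, z ∈ ρA → ∀ y : H, R z y ∈ D)
    (hres1 : ∀ z (hz : z ∈ ρA) (y : H), z • R z y - A ⟨R z y, hmem z hz y⟩ = y)
    (hres2 : ∀ z ∈ ρA, ∀ x : D, R z (z • (x : H) - A x) = (x : H))
    (τ : D →ₗ[ℂ] h) (C : ℝ)
    (hτ : ∀ x : D, ‖τ x‖ ≤ C * (‖(x : H)‖ + ‖A x‖))
    (G : ℂ → h →L[ℂ] H)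
    (hG : ∀ z (hz : z ∈ ρA) (ζ : h) (y : H),
      ⟪G z ζ, y⟫ = ⟪ζ, τ ⟨R ((starRingEnd ℂ) z) y, hmem _ (hρconj z hz) y⟩⟫)
    -- `Γ_z = -z τ_a (-A₀+z)⁻¹ G₀`:
    (Γ : ℂ → h →L[ℂ] h)
    (hΓ : ∀ z (hz : z ∈ ρA) (ζ : h),
      Γ z ζ = (-z) • τ ⟨R z (G 0 ζ), hmem z hz (G 0 ζ)⟩)
    -- the radial data of the disc example:
    (a : ℝ → ℝ) (u : ℕ → ℕ → ℝ → ℝ) (lamv : ℕ → ℕ → ℝ) (ν : ℕ → ℕ → ℝ)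
    (hlam_pos : ∀ m k, 0 < lamv m k)
    (hν : ∀ m k, Tendsto (fun r => a r * deriv (u m k) r)
      (nhdsWithin 1 (Set.Iio 1)) (nhds (ν m k)))
    -- the orthonormal eigenbasis `U_{mn}` of `L²(D)`:
    (U : ℕ → ℤ → H)
    (hUon : Orthonormal ℂ (fun p : ℕ × ℤ => U p.1 p.2))
    (hUtotal : ⊤ ≤ (Submodule.span ℂ (Set.range fun p : ℕ × ℤ => U p.1 p.2)).topologicalClosure)
    (hUmem : ∀ m n, U m n ∈ D)
    (hAU : ∀ (m : ℕ) (n : ℤ),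
      A ⟨U m n, hUmem m n⟩ = (-((lamv m n.natAbs : ℂ) ^ 2)) • U m n)
    -- the orthonormal basis `e_k` of `H^{1/2}(S¹)`:
    (e : ℤ → h) (heon : Orthonormal ℂ e)
    (hetotal : ⊤ ≤ (Submodule.span ℂ (Set.range e)).topologicalClosure)
    -- `τ_a U_{mn} = (n²+1)^{1/4} ν_{m|n|} e_n`:
    (hτU : ∀ (m : ℕ) (n : ℤ),
      τ ⟨U m n, hUmem m n⟩ =
        (((((n : ℝ) ^ 2 + 1) ^ ((1 : ℝ) / 4) * ν m n.natAbs : ℝ) : ℂ)) • e n) :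
    ∀ z (hz : z ∈ ρA) (i k : ℤ),
      ⟪e i, Γ z (e k)⟫ =
        if i = k then
          (-z) * ((((k : ℝ) ^ 2 + 1) ^ ((1 : ℝ) / 2) : ℝ) : ℂ) *
            ∑' m : ℕ, ((ν m k.natAbs : ℝ) : ℂ) ^ 2 /
              (((lamv m k.natAbs : ℂ) ^ 2) * ((lamv m k.natAbs : ℂ) ^ 2 + z))
        else 0 :=
  disc_Gamma_matrix_elements_general D A ρA h0ρ hρconj R hmem hres2 τ G hG Γ hΓ lamv ν U hUon
    hUtotal hUmem hAU e heon hτU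
end
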